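/- arXiv:1909.10072 — 6 statements merged into one kernel-verified Lean document; each statement's English description precedes it below -/
import Mathlib

section
/- Let d ≥ 1, β > 0, and let Φ : [0,∞) × ℝ^d → ℝ satisfy condition (C). Then the map (t, v) ↦ argmin_{w ∈ ℝ^d} { Φ(t, w) − ⟨w, v⟩ } (which is single-valued by strong convexity) is jointly continuous on [0,T] × ℝ^d for every T > 0. -/
open RealInnerProductSpace Set Metric

/-- A function `f : ℝ^d → ℝ` is `β`-strongly convex. -/
def IsStronglyConvex {d : ℕ} (β : ℝ) (f : EuclideanSpace ℝ (Fin d) → ℝ) : Prop :=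
  ∀ x y : EuclideanSpace ℝ (Fin d), ∀ α : ℝ, 0 ≤ α → α ≤ 1 →
    f (α • x + (1 - α) • y) ≤ α * f x + (1 - α) * f y - β * (α * (1 - α)) / 2 * ‖x - y‖ ^ 2

/-- `g` is a subgradient of `f` at `w`. -/
def IsSubgradientAt {d : ℕ} (f : EuclideanSpace ℝ (Fin d) → ℝ)
    (w g : EuclideanSpace ℝ (Fin d)) : Prop :=
  ∀ u, f u ≥ f w + ⟪g, u - w⟫


section aux
variable {d : ℕ}

local notation "E" => EuclideanSpace ℝ (Fin d)

lemma sc_tilt {β : ℝ} {f : E → ℝ} (hf : IsStronglyConvex β f) (v : E) :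
    IsStronglyConvex β (fun u => f u - ⟪u, v⟫) := by
  intro x y α h0 h1
  have h := hf x y α h0 h1
  have hin : ⟪α • x + (1 - α) • y, v⟫ = α * ⟪x, v⟫ + (1 - α) * ⟪y, v⟫ := by
    rw [inner_add_left, real_inner_smul_left, real_inner_smul_left]
  simp only [hin]
  linarith

lemma sc_convexOn {β : ℝ} (hβ : 0 < β) {f : E → ℝ} (hf : IsStronglyConvex β f) :
    ConvexOn ℝ Set.univ f := by
  refine ⟨convex_univ, ?_⟩
  intro x _ y _ a b ha hb hab
  have hb' : b = 1 - a := by linarith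
  subst hb'
  have h := hf x y a ha (by linarith)
  simp only [smul_eq_mul]
  nlinarith [sq_nonneg ‖x - y‖, mul_nonneg (mul_nonneg ha hb) (le_of_lt hβ)]

lemma sc_growth {β : ℝ} (hβ : 0 < β) {f : E → ℝ} (hf : IsStronglyConvex β f)
    {p : E} (hp : ∀ u, f p ≤ f u) (u : E) :
    f p + β / 4 * ‖u - p‖ ^ 2 ≤ f u := by
  have h := hf u p (1/2) (by norm_num) (by norm_num)
  have h2 := hp ((1/2 : ℝ) • u + (1 - 1/2 : ℝ) • p)
  nlinarith


-- sum of coordinates times basis vectors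
lemma sum_coord_single (c : E) : ∑ i : Fin d, c i • EuclideanSpace.single i (1:ℝ) = c := by
  have := (EuclideanSpace.basisFun (Fin d) ℝ).sum_repr c
  simpa [EuclideanSpace.basisFun_apply, EuclideanSpace.basisFun_repr] using this

lemma coord_abs_le_norm (c : E) (i : Fin d) : |c i| ≤ ‖c‖ := by
  have h := abs_real_inner_le_norm (EuclideanSpace.single i (1:ℝ)) c
  simpa [EuclideanSpace.inner_single_left, EuclideanSpace.norm_single] using h

lemma uniformUpper (hd : 1 ≤ d) {T : ℝ} (Φ : ℝ → E → ℝ)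
    (hconv : ∀ t ∈ Icc (0:ℝ) T, ConvexOn ℝ Set.univ (Φ t))
    (hcont : ∀ u : E, ContinuousOn (fun t => Φ t u) (Icc (0:ℝ) T))
    (x₀ : E) (R : ℝ) (hR : 0 < R) :
    ∃ M : ℝ, ∀ t ∈ Icc (0:ℝ) T, ∀ u ∈ closedBall x₀ R, Φ t u ≤ M := by
  classical
  set ρ : ℝ := d * R + 1 with hρdef
  have hρ : 0 < ρ := by positivity
  set P : Fin d × Bool → E := fun is =>
    x₀ + (if is.2 then ρ else -ρ) • EuclideanSpace.single is.1 (1:ℝ) with hP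
  -- bound at vertices
  have hvert : ∀ is : Fin d × Bool, ∃ C : ℝ, ∀ t ∈ Icc (0:ℝ) T, |Φ t (P is)| ≤ C := by
    intro is
    obtain ⟨C, hC⟩ := isCompact_Icc.exists_bound_of_continuousOn (hcont (P is))
    exact ⟨C, fun t ht => hC t ht⟩
  choose C hC using hvert
  refine ⟨∑ is : Fin d × Bool, |C is|, ?_⟩
  intro t ht u hu
  set c : E := u - x₀ with hc
  have hcn : ‖c‖ ≤ R := by
    rw [hc, ← dist_eq_norm]; exact mem_closedBall.mp hu
  have habs : ∀ i, |c i| ≤ R := fun i => le_trans (coord_abs_le_norm c i) hcn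
  have hsum_abs : ∑ i : Fin d, |c i| ≤ d * R := by
    calc ∑ i : Fin d, |c i| ≤ ∑ _i : Fin d, R := Finset.sum_le_sum fun i _ => habs i
    _ = d * R := by simp [mul_comm]
  set i₀ : Fin d := ⟨0, hd⟩ with hi₀
  set slack : ℝ := 1 - (∑ i : Fin d, |c i|) / ρ with hslack
  have hsle : (∑ i : Fin d, |c i|) ≤ ρ := by rw [hρdef]; linarith
  have hslack_nonneg : 0 ≤ slack := by
    rw [hslack]
    have := (div_le_one hρ).mpr hsle
    linarith
  set w : Fin d × Bool → ℝ := fun is =>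
    (if is.2 then max (c is.1) 0 else max (-c is.1) 0) / ρ
      + (if is.1 = i₀ then slack / 2 else 0) with hw
  have hw_nonneg : ∀ is, 0 ≤ w is := by
    intro is
    rw [hw]
    have h1 : 0 ≤ (if is.2 then max (c is.1) 0 else max (-c is.1) 0) / ρ := by
      apply div_nonneg _ hρ.le
      split <;> exact le_max_right _ _
    have h2 : 0 ≤ (if is.1 = i₀ then slack / 2 else 0) := by
      split
      · exact div_nonneg hslack_nonneg (by norm_num)
      · exact le_refl 0
    exact add_nonneg h1 h2
  have hw_sum : ∑ is : Fin d × Bool, w is = 1 := by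
    rw [hw]
    simp only []
    rw [Finset.sum_add_distrib]
    have h1 : ∑ is : Fin d × Bool, (if is.2 then max (c is.1) 0 else max (-c is.1) 0) / ρ
        = (∑ i : Fin d, |c i|) / ρ := by
      rw [Fintype.sum_prod_type]
      have hin : ∀ i : Fin d,
          (∑ s : Bool, (if s then max (c i) 0 else max (-c i) 0) / ρ) = |c i| / ρ := by
        intro i
        rw [Fintype.sum_bool]
        simp only [Bool.false_eq_true, if_true, if_false]
        rw [← add_div, max_zero_add_max_neg_zero_eq_abs_self]
      rw [Finset.sum_congr rfl (fun i _ => hin i), ← Finset.sum_div]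
    have h2 : ∑ is : Fin d × Bool, (if is.1 = i₀ then slack / 2 else 0) = slack := by
      rw [Fintype.sum_prod_type]
      have hin : ∀ i : Fin d,
          (∑ _s : Bool, (if i = i₀ then slack / 2 else 0)) = (if i = i₀ then slack else 0) := by
        intro i
        rw [Fintype.sum_bool]
        split <;> ring
      rw [Finset.sum_congr rfl (fun i _ => hin i), Finset.sum_ite_eq' Finset.univ i₀]
      simp
    rw [h1, h2, hslack]
    ring
  have hw_pt : ∑ is : Fin d × Bool, w is • P is = u := by
    have expand : ∀ is : Fin d × Bool, w is • P is
        = w is • x₀ + (w is * (if is.2 then ρ else -ρ)) • EuclideanSpace.single is.1 (1:ℝ) := by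
      intro is
      rw [hP]
      simp only []
      rw [smul_add, smul_smul]
    rw [Finset.sum_congr rfl (fun is _ => expand is), Finset.sum_add_distrib,
      ← Finset.sum_smul, hw_sum, one_smul]
    have h2 : ∑ is : Fin d × Bool,
        (w is * (if is.2 then ρ else -ρ)) • EuclideanSpace.single is.1 (1:ℝ) = c := by
      rw [Fintype.sum_prod_type]
      have hin : ∀ i : Fin d,
          (∑ s : Bool, (w (i, s) * (if s then ρ else -ρ)) • EuclideanSpace.single i (1:ℝ))
          = c i • EuclideanSpace.single i (1:ℝ) := by
        intro i
        rw [Fintype.sum_bool, ← add_smul]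
        congr 1
        rw [hw]
        simp only [Bool.false_eq_true, if_true, if_false]
        have hρ' : ρ ≠ 0 := ne_of_gt hρ
        have hab := max_zero_sub_max_neg_zero_eq_self (c i)
        field_simp
        linear_combination hab
      rw [Finset.sum_congr rfl (fun i _ => hin i), sum_coord_single]
    rw [h2, hc]
    abel
  have hjensen := (hconv t ht).map_sum_le (t := Finset.univ)
    (fun is _ => hw_nonneg is) hw_sum (fun is _ => Set.mem_univ (P is))
  rw [hw_pt] at hjensen
  refine le_trans hjensen ?_
  calc ∑ is : Fin d × Bool, w is * Φ t (P is)
      ≤ ∑ is : Fin d × Bool, w is * (∑ js : Fin d × Bool, |C js|) := by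
        apply Finset.sum_le_sum
        intro is _
        apply mul_le_mul_of_nonneg_left _ (hw_nonneg is)
        calc Φ t (P is) ≤ |Φ t (P is)| := le_abs_self _
        _ ≤ |C is| := le_trans (hC is t ht) (le_abs_self _)
        _ ≤ ∑ js : Fin d × Bool, |C js| :=
            Finset.single_le_sum (fun js _ => abs_nonneg (C js)) (Finset.mem_univ is)
    _ = (∑ is : Fin d × Bool, w is) * (∑ js : Fin d × Bool, |C js|) := by
        rw [Finset.sum_mul]
    _ = ∑ js : Fin d × Bool, |C js| := by rw [hw_sum, one_mul]

lemma uniformAbs (hd : 1 ≤ d) {T : ℝ} (Φ : ℝ → E → ℝ)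
    (hconv : ∀ t ∈ Icc (0:ℝ) T, ConvexOn ℝ Set.univ (Φ t))
    (hcont : ∀ u : E, ContinuousOn (fun t => Φ t u) (Icc (0:ℝ) T))
    (x₀ : E) (R : ℝ) (hR : 0 < R) :
    ∃ M : ℝ, 0 ≤ M ∧ ∀ t ∈ Icc (0:ℝ) T, ∀ u ∈ closedBall x₀ R, |Φ t u| ≤ M := by
  obtain ⟨M, hM⟩ := uniformUpper hd Φ hconv hcont x₀ R hR
  obtain ⟨C₀, hC₀⟩ := isCompact_Icc.exists_bound_of_continuousOn (hcont x₀)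
  refine ⟨|M| + 2 * |C₀|, by positivity, ?_⟩
  intro t ht u hu
  have hup : Φ t u ≤ M := hM t ht u hu
  have hrefl : (2:ℝ) • x₀ - u ∈ closedBall x₀ R := by
    rw [mem_closedBall, dist_eq_norm]
    have : (2:ℝ) • x₀ - u - x₀ = -(u - x₀) := by module
    rw [this, norm_neg, ← dist_eq_norm]
    exact mem_closedBall.mp hu
  have hmid : (1/2 : ℝ) • u + (1/2 : ℝ) • ((2:ℝ) • x₀ - u) = x₀ := by module
  have hcv := (hconv t ht).2 (Set.mem_univ u) (Set.mem_univ ((2:ℝ) • x₀ - u))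
    (by norm_num : (0:ℝ) ≤ 1/2) (by norm_num : (0:ℝ) ≤ 1/2) (by norm_num)
  rw [hmid] at hcv
  simp only [smul_eq_mul] at hcv
  have h0 : |Φ t x₀| ≤ C₀ := hC₀ t ht
  have hlow : -( |M| + 2 * |C₀| ) ≤ Φ t u := by
    have hr : Φ t ((2:ℝ) • x₀ - u) ≤ M := hM t ht _ hrefl
    have h1 : -C₀ ≤ Φ t x₀ := neg_le_of_abs_le h0
    have hM' : M ≤ |M| := le_abs_self M
    have hC' : C₀ ≤ |C₀| := le_abs_self C₀
    nlinarith
  exact abs_le.mpr ⟨hlow, le_trans hup (by linarith [le_abs_self M, abs_nonneg C₀])⟩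

lemma equiLip {f : E → ℝ} (hconv : ConvexOn ℝ Set.univ f)
    {x₀ : E} {R M : ℝ}
    (hM : ∀ u ∈ closedBall x₀ (R + 1), |f u| ≤ M)
    {x y : E} (hx : x ∈ closedBall x₀ R) (hy : y ∈ closedBall x₀ R) (hR : 0 ≤ R) :
    |f y - f x| ≤ 2 * M * ‖y - x‖ := by
  have hMnn : 0 ≤ M := le_trans (abs_nonneg _) (hM x (closedBall_subset_closedBall (by linarith) hx))
  have key : ∀ a b : E, a ∈ closedBall x₀ R → b ∈ closedBall x₀ R →
      f b - f a ≤ 2 * M * ‖b - a‖ := by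
    intro a b ha hb
    rcases eq_or_ne b a with rfl | hne
    · simp
    · set D : ℝ := ‖b - a‖ with hD
      have hD0 : 0 < D := by rw [hD]; exact norm_pos_iff.mpr (sub_ne_zero.mpr hne)
      set z : E := b + D⁻¹ • (b - a) with hz
      have hzball : z ∈ closedBall x₀ (R + 1) := by
        rw [mem_closedBall, dist_eq_norm]
        have : z - x₀ = (b - x₀) + D⁻¹ • (b - a) := by rw [hz]; module
        rw [this]
        calc ‖(b - x₀) + D⁻¹ • (b - a)‖ ≤ ‖b - x₀‖ + ‖D⁻¹ • (b - a)‖ := norm_add_le _ _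
        _ ≤ R + 1 := by
            have h1 : ‖b - x₀‖ ≤ R := by rw [← dist_eq_norm]; exact mem_closedBall.mp hb
            have h2 : ‖D⁻¹ • (b - a)‖ = D⁻¹ * D := by
              rw [norm_smul, Real.norm_eq_abs, abs_of_pos (inv_pos.mpr hD0), hD]
            rw [h2, inv_mul_cancel₀ (ne_of_gt hD0)]
            linarith
      set θ : ℝ := D / (1 + D) with hθ
      have hθ0 : 0 ≤ θ := by rw [hθ]; positivity
      have hθ1 : θ ≤ 1 := by
        rw [hθ, div_le_one (by linarith)]; linarith
      have hθD : θ ≤ D := by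
        rw [hθ, div_le_iff₀ (by linarith : (0:ℝ) < 1 + D)]
        nlinarith
      have hcomb : b = (1 - θ) • a + θ • z := by
        rw [hz, hθ]
        match_scalars <;> field_simp <;> ring
      have hcv := hconv.2 (Set.mem_univ a) (Set.mem_univ z) (by linarith : (0:ℝ) ≤ 1 - θ) hθ0 (by ring)
      rw [← hcomb] at hcv
      simp only [smul_eq_mul] at hcv
      have hfz : f z ≤ M := le_trans (le_abs_self _) (hM z hzball)
      have hfa : -M ≤ f a := neg_le_of_abs_le (hM a (closedBall_subset_closedBall (by linarith) ha))
      have : f b - f a ≤ θ * (f z - f a) := by nlinarith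
      calc f b - f a ≤ θ * (f z - f a) := this
      _ ≤ θ * (2 * M) := by
          apply mul_le_mul_of_nonneg_left _ hθ0
          linarith
      _ ≤ D * (2 * M) := mul_le_mul_of_nonneg_right hθD (by linarith)
      _ = 2 * M * ‖b - a‖ := by rw [hD]; ring
  have h1 := key x y hx hy
  have h2 := key y x hy hx
  rw [abs_le]
  constructor
  · have : ‖x - y‖ = ‖y - x‖ := norm_sub_rev _ _
    rw [this] at h2
    linarith
  · exact h1

lemma unifConv (hd : 1 ≤ d) {T : ℝ} (Φ : ℝ → E → ℝ)
    (hconv : ∀ t ∈ Icc (0:ℝ) T, ConvexOn ℝ Set.univ (Φ t))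
    (hcont : ∀ u : E, ContinuousOn (fun t => Φ t u) (Icc (0:ℝ) T))
    {t₀ : ℝ} (ht₀ : t₀ ∈ Icc (0:ℝ) T)
    (x₀ : E) (R : ℝ) (hR : 0 < R) {ε : ℝ} (hε : 0 < ε) :
    ∀ᶠ t in nhdsWithin t₀ (Icc (0:ℝ) T),
      ∀ u ∈ closedBall x₀ R, |Φ t u - Φ t₀ u| ≤ ε := by
  obtain ⟨M, hM0, hM⟩ := uniformAbs hd Φ hconv hcont x₀ (R + 1) (by linarith)
  -- Lipschitz bound on closedBall x₀ R for each t in Icc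
  have hLip : ∀ t ∈ Icc (0:ℝ) T, ∀ x ∈ closedBall x₀ R, ∀ y ∈ closedBall x₀ R,
      |Φ t y - Φ t x| ≤ 2 * M * ‖y - x‖ := by
    intro t ht x hx y hy
    exact equiLip (hconv t ht) (fun u hu => hM t ht u hu) hx hy hR.le
  set ε' : ℝ := min 1 (ε / (3 * (2 * M + 1))) with hε'
  have hε'0 : 0 < ε' := by
    rw [hε']
    apply lt_min one_pos
    positivity
  obtain ⟨net, hnet_sub, hnet_fin, hnet_cover⟩ :=
    (isCompact_closedBall x₀ R).finite_cover_balls (e := ε') hε'0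
  -- eventually, Φ t is close to Φ t₀ at each net point
  have hev : ∀ᶠ t in nhdsWithin t₀ (Icc (0:ℝ) T), ∀ j ∈ net, |Φ t j - Φ t₀ j| ≤ ε / 3 := by
    rw [Set.Finite.eventually_all hnet_fin]
    intro j _
    have hcj : ContinuousWithinAt (fun t => Φ t j) (Icc (0:ℝ) T) t₀ := (hcont j) t₀ ht₀
    have := Metric.tendsto_nhds.mp hcj (ε / 3) (by positivity)
    filter_upwards [this] with t hdt
    rw [Real.dist_eq] at hdt
    exact le_of_lt hdt
  filter_upwards [hev, self_mem_nhdsWithin] with t htnet htIcc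
  intro u hu
  obtain ⟨j, hjnet, hju⟩ := Set.mem_iUnion₂.mp (hnet_cover hu)
  have hjball : j ∈ closedBall x₀ R := hnet_sub hjnet
  have hdju : ‖u - j‖ ≤ ε' := by
    rw [← dist_eq_norm]
    exact le_of_lt (mem_ball.mp hju)
  have h1 : |Φ t u - Φ t j| ≤ 2 * M * ‖u - j‖ := hLip t htIcc j hjball u hu
  have h2 : |Φ t₀ j - Φ t₀ u| ≤ 2 * M * ‖j - u‖ := hLip t₀ ht₀ u hu j hjball
  have h3 : |Φ t j - Φ t₀ j| ≤ ε / 3 := htnet j hjnet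
  have hnr : ‖j - u‖ = ‖u - j‖ := norm_sub_rev _ _
  have hMε' : 2 * M * ε' ≤ ε / 3 := by
    have h4 : ε' ≤ ε / (3 * (2 * M + 1)) := min_le_right _ _
    calc 2 * M * ε' ≤ 2 * M * (ε / (3 * (2 * M + 1))) :=
          mul_le_mul_of_nonneg_left h4 (by positivity)
    _ = 2 * M / (2 * M + 1) * (ε / 3) := by
        have h2M : (2 * M + 1) ≠ 0 := by positivity
        field_simp
        try exact Or.inl trivial
    _ ≤ 1 * (ε / 3) := by
        apply mul_le_mul_of_nonneg_right _ (by positivity)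
        rw [div_le_one (by positivity)]
        linarith
    _ = ε / 3 := one_mul _
  calc |Φ t u - Φ t₀ u| ≤ |Φ t u - Φ t j| + |Φ t j - Φ t₀ j| + |Φ t₀ j - Φ t₀ u| := by
        have := abs_sub_le (Φ t u) (Φ t j) (Φ t₀ u)
        have := abs_sub_le (Φ t j) (Φ t₀ j) (Φ t₀ u)
        linarith
  _ ≤ 2 * M * ε' + ε / 3 + 2 * M * ε' := by
      have b1 : 2 * M * ‖u - j‖ ≤ 2 * M * ε' := mul_le_mul_of_nonneg_left hdju (by positivity)
      rw [hnr] at h2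
      linarith
  _ ≤ ε := by linarith

end aux


set_option maxHeartbeats 2000000 in
/-- under condition (C), the argmin map
`(t,v) ↦ argmin_w { Φ(t,w) − ⟨w,v⟩ }` is jointly continuous on `[0,T] × ℝ^d`. -/
theorem stmt4 {d : ℕ} (hd : 1 ≤ d) {β : ℝ} (hβ : 0 < β)
    (Φ : ℝ → EuclideanSpace ℝ (Fin d) → ℝ)
    (hC1 : ∀ t : ℝ, 0 ≤ t → IsStronglyConvex β (Φ t) ∧ LowerSemicontinuous (Φ t))
    (hC2 : ∀ u : EuclideanSpace ℝ (Fin d), ContinuousOn (fun t => Φ t u) (Set.Ici 0))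
    (hC3 : ∃ u₀ : EuclideanSpace ℝ (Fin d), ∀ T : ℝ, 0 < T → ∃ cT : ℝ, 0 < cT ∧
      ∀ t ∈ Set.Icc (0 : ℝ) T, ∀ g : EuclideanSpace ℝ (Fin d),
        IsSubgradientAt (Φ t) u₀ g → ‖g‖ ≤ cT)
    (m : ℝ → EuclideanSpace ℝ (Fin d) → EuclideanSpace ℝ (Fin d))
    (hm : ∀ t : ℝ, 0 ≤ t → ∀ v u : EuclideanSpace ℝ (Fin d),
      Φ t (m t v) - ⟪m t v, v⟫ ≤ Φ t u - ⟪u, v⟫) :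
    ∀ T : ℝ, 0 < T →
      ContinuousOn (fun p : ℝ × EuclideanSpace ℝ (Fin d) => m p.1 p.2)
        (Set.Icc (0 : ℝ) T ×ˢ (Set.univ : Set (EuclideanSpace ℝ (Fin d)))) := by
  clear hC3
  intro T hT
  have hIccIci : Icc (0:ℝ) T ⊆ Ici (0:ℝ) := fun t ht => ht.1
  have hconv : ∀ t ∈ Icc (0:ℝ) T, ConvexOn ℝ Set.univ (Φ t) :=
    fun t ht => sc_convexOn hβ (hC1 t ht.1).1
  have hcont : ∀ u, ContinuousOn (fun t => Φ t u) (Icc (0:ℝ) T) :=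
    fun u => (hC2 u).mono hIccIci
  have hgrow : ∀ t ∈ Icc (0:ℝ) T, ∀ v u : EuclideanSpace ℝ (Fin d),
      (Φ t (m t v) - ⟪m t v, v⟫) + β / 4 * ‖u - m t v‖ ^ 2 ≤ Φ t u - ⟪u, v⟫ := by
    intro t ht v u
    exact sc_growth hβ (sc_tilt (hC1 t ht.1).1 v) (fun u' => hm t ht.1 v u') u
  rintro ⟨t₀, v₀⟩ ⟨ht₀, -⟩
  set m₀ := m t₀ v₀ with hm₀def
  -- key estimate
  have hkey : ∀ t ∈ Icc (0:ℝ) T, ∀ v : EuclideanSpace ℝ (Fin d),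
      β / 2 * ‖m t v - m₀‖ ^ 2 ≤ (Φ t m₀ - Φ t₀ m₀) + (Φ t₀ (m t v) - Φ t (m t v))
        + ‖m t v - m₀‖ * ‖v - v₀‖ := by
    intro t ht v
    have h1 := hgrow t ht v m₀
    have h2 := hgrow t₀ ht₀ v₀ (m t v)
    have hns : ‖m₀ - m t v‖ = ‖m t v - m₀‖ := norm_sub_rev _ _
    rw [hns] at h1
    have hip : ⟪m t v - m₀, v - v₀⟫
        = (⟪m t v, v⟫ - ⟪m₀, v⟫) - (⟪m t v, v₀⟫ - ⟪m₀, v₀⟫) := by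
      rw [inner_sub_left, inner_sub_right, inner_sub_right]
      ring
    have hcs : ⟪m t v - m₀, v - v₀⟫ ≤ ‖m t v - m₀‖ * ‖v - v₀‖ := real_inner_le_norm _ _
    rw [hip] at hcs
    linarith
  -- boundedness of the argmin near (t₀, v₀)
  obtain ⟨M₁, hM₁0, hM₁⟩ := uniformAbs hd Φ hconv hcont m₀ 1 one_pos
  set Cb : ℝ := 2 * M₁ + 2 * (‖m₀‖ + 1) * (‖v₀‖ + 1) with hCbdef
  have hCb0 : 0 ≤ Cb := by positivity
  set Rb : ℝ := 1 + 4 * Cb / β with hRbdef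
  have hRb1 : 1 ≤ Rb := by
    rw [hRbdef]
    have : 0 ≤ 4 * Cb / β := by positivity
    linarith
  have hbound : ∀ t ∈ Icc (0:ℝ) T, ∀ v : EuclideanSpace ℝ (Fin d),
      ‖v - v₀‖ ≤ 1 → ‖m t v - m₀‖ ≤ Rb := by
    intro t ht v hv
    by_contra hDc
    push_neg at hDc
    set D : ℝ := ‖m t v - m₀‖ with hDdef
    have hD1 : 1 < D := lt_of_le_of_lt hRb1 hDc
    have hD0 : (0:ℝ) < D := by linarith
    have hDinv1 : D⁻¹ ≤ 1 := by
      rw [inv_le_one_iff₀]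
      right; linarith
    have hDinv0 : 0 < D⁻¹ := inv_pos.mpr hD0
    set q : EuclideanSpace ℝ (Fin d) := m₀ + D⁻¹ • (m t v - m₀) with hqdef
    have hqm : q = (1 - D⁻¹) • m₀ + D⁻¹ • (m t v) := by rw [hqdef]; module
    have hqball : q ∈ closedBall m₀ 1 := by
      rw [mem_closedBall, dist_eq_norm]
      have hqsub : q - m₀ = D⁻¹ • (m t v - m₀) := by rw [hqdef]; module
      rw [hqsub, norm_smul, Real.norm_eq_abs, abs_of_pos hDinv0, ← hDdef]
      exact le_of_eq (inv_mul_cancel₀ (ne_of_gt hD0))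
    have hcvf := (sc_convexOn hβ (sc_tilt (hC1 t ht.1).1 v)).2 (Set.mem_univ m₀)
      (Set.mem_univ (m t v)) (by linarith : (0:ℝ) ≤ 1 - D⁻¹) hDinv0.le (by ring)
    rw [← hqm] at hcvf
    simp only [smul_eq_mul] at hcvf
    have hgq := hgrow t ht v q
    have hqmv : ‖q - m t v‖ = D - 1 := by
      have hqsub : q - m t v = (D⁻¹ - 1) • (m t v - m₀) := by rw [hqdef]; module
      rw [hqsub, norm_smul, Real.norm_eq_abs, abs_of_nonpos (by linarith), ← hDdef]
      have hne : D ≠ 0 := ne_of_gt hD0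
      field_simp
      ring
    rw [hqmv] at hgq
    -- numeric bounds
    have hvn : ‖v‖ ≤ ‖v₀‖ + 1 := by
      have : v = v₀ + (v - v₀) := by abel
      calc ‖v‖ = ‖v₀ + (v - v₀)‖ := by rw [← this]
      _ ≤ ‖v₀‖ + ‖v - v₀‖ := norm_add_le _ _
      _ ≤ ‖v₀‖ + 1 := by linarith
    have hΦm₀ : Φ t m₀ ≤ M₁ :=
      le_trans (le_abs_self _) (hM₁ t ht m₀ (mem_closedBall_self one_pos.le))
    have hΦq : -M₁ ≤ Φ t q := neg_le_of_abs_le (hM₁ t ht q hqball)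
    have hqn : ‖q‖ ≤ ‖m₀‖ + 1 := by
      have h := mem_closedBall.mp hqball
      rw [dist_eq_norm] at h
      calc ‖q‖ = ‖m₀ + (q - m₀)‖ := by rw [add_sub_cancel]
      _ ≤ ‖m₀‖ + ‖q - m₀‖ := norm_add_le _ _
      _ ≤ ‖m₀‖ + 1 := by linarith
    have hipm₀ : |⟪m₀, v⟫| ≤ ‖m₀‖ * (‖v₀‖ + 1) :=
      le_trans (abs_real_inner_le_norm _ _)
        (mul_le_mul_of_nonneg_left hvn (norm_nonneg _))
    have hipq : |⟪q, v⟫| ≤ (‖m₀‖ + 1) * (‖v₀‖ + 1) :=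
      le_trans (abs_real_inner_le_norm _ _)
        (mul_le_mul hqn hvn (norm_nonneg _) (by positivity))
    -- combine
    have hstep : (Φ t q - ⟪q, v⟫) * D
        ≤ ((1 - D⁻¹) * (Φ t m₀ - ⟪m₀, v⟫) + D⁻¹ * (Φ t (m t v) - ⟪m t v, v⟫)) * D :=
      mul_le_mul_of_nonneg_right hcvf hD0.le
    have hexp : ((1 - D⁻¹) * (Φ t m₀ - ⟪m₀, v⟫) + D⁻¹ * (Φ t (m t v) - ⟪m t v, v⟫)) * D
        = (Φ t m₀ - ⟪m₀, v⟫) * D - (Φ t m₀ - ⟪m₀, v⟫) + (Φ t (m t v) - ⟪m t v, v⟫) := by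
      have hne : D ≠ 0 := ne_of_gt hD0
      field_simp
    rw [hexp] at hstep
    -- a - cq ≥ β/4 (D-1), a - cq ≤ Cb, β/4(D-1) > β/4 * 4Cb/β = Cb : contradiction
    have hacq : (Φ t m₀ - ⟪m₀, v⟫) - (Φ t q - ⟪q, v⟫) ≤ Cb := by
      have h1 := le_abs_self (⟪m₀, v⟫ : ℝ)
      have h2 := neg_le_of_abs_le hipm₀
      have h3 := le_abs_self (⟪q, v⟫ : ℝ)
      have h4 := neg_le_of_abs_le hipq
      have hm₀v : ‖m₀‖ * (‖v₀‖ + 1) ≤ (‖m₀‖ + 1) * (‖v₀‖ + 1) := by nlinarith [norm_nonneg v₀]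
      rw [hCbdef]
      nlinarith
    -- derive β/4 (D-1)^2 ≤ (D-1) * Cb
    have hkey2 : β / 4 * (D - 1) ^ 2 ≤ (D - 1) * Cb := by
      nlinarith [hstep, hgq, hacq, hD1]
    have hcontr : D - 1 ≤ 4 * Cb / β := by
      have hD1' : 0 < D - 1 := by linarith
      rw [le_div_iff₀ hβ]
      nlinarith [hkey2]
    rw [hRbdef] at hDc
    linarith
  -- final continuity argument
  show ContinuousWithinAt _ _ _
  rw [ContinuousWithinAt]
  apply Metric.tendsto_nhds.mpr
  intro ε hε
  set ε₁ : ℝ := β * ε ^ 2 / 16 with hε₁def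
  have hε₁0 : 0 < ε₁ := by positivity
  have hRb0 : (0:ℝ) < Rb := by linarith
  have hunif := unifConv hd Φ hconv hcont ht₀ m₀ Rb hRb0 hε₁0
  set δ : ℝ := min 1 (β * ε ^ 2 / (8 * (Rb + 1))) with hδdef
  have hδ0 : 0 < δ := lt_min one_pos (by positivity)
  rw [nhdsWithin_prod_eq, nhdsWithin_univ]
  have hvev : ∀ᶠ v in nhds v₀, ‖v - v₀‖ ≤ δ := by
    filter_upwards [Metric.closedBall_mem_nhds v₀ hδ0] with v hv
    rw [mem_closedBall, dist_eq_norm] at hv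
    exact hv
  filter_upwards [Filter.Eventually.prod_mk (hunif.and self_mem_nhdsWithin) hvev] with p hp
  obtain ⟨⟨hunif_p, hpIcc⟩, hpv⟩ := hp
  have hvδ1 : ‖p.2 - v₀‖ ≤ 1 := le_trans hpv (min_le_left _ _)
  have hDb : ‖m p.1 p.2 - m₀‖ ≤ Rb := hbound p.1 hpIcc p.2 hvδ1
  have hmem : m p.1 p.2 ∈ closedBall m₀ Rb := by
    rw [mem_closedBall, dist_eq_norm]; exact hDb
  have hmem₀ : m₀ ∈ closedBall m₀ Rb := mem_closedBall_self hRb0.le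
  have e1 : |Φ p.1 m₀ - Φ t₀ m₀| ≤ ε₁ := hunif_p m₀ hmem₀
  have e2 : |Φ p.1 (m p.1 p.2) - Φ t₀ (m p.1 p.2)| ≤ ε₁ := hunif_p (m p.1 p.2) hmem
  have hk := hkey p.1 hpIcc p.2
  have hδ2 : Rb * δ ≤ β * ε ^ 2 / 8 := by
    have hδle : δ ≤ β * ε ^ 2 / (8 * (Rb + 1)) := min_le_right _ _
    calc Rb * δ ≤ Rb * (β * ε ^ 2 / (8 * (Rb + 1))) :=
          mul_le_mul_of_nonneg_left hδle hRb0.le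
    _ = Rb / (Rb + 1) * (β * ε ^ 2 / 8) := by
        have : (Rb + 1) ≠ 0 := by positivity
        field_simp
    _ ≤ 1 * (β * ε ^ 2 / 8) := by
        apply mul_le_mul_of_nonneg_right _ (by positivity)
        rw [div_le_one (by positivity)]
        linarith
    _ = β * ε ^ 2 / 8 := one_mul _
  have hD2 : β / 2 * ‖m p.1 p.2 - m₀‖ ^ 2 ≤ β * ε ^ 2 / 4 := by
    have hmul : ‖m p.1 p.2 - m₀‖ * ‖p.2 - v₀‖ ≤ Rb * δ :=
      mul_le_mul hDb hpv (norm_nonneg _) hRb0.le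
    have ha1 : Φ p.1 m₀ - Φ t₀ m₀ ≤ ε₁ := le_trans (le_abs_self _) e1
    have ha2 : Φ t₀ (m p.1 p.2) - Φ p.1 (m p.1 p.2) ≤ ε₁ := by
      have := neg_le_of_abs_le e2
      linarith
    rw [hε₁def] at ha1 ha2
    have hchain : ‖m p.1 p.2 - m₀‖ * ‖p.2 - v₀‖ ≤ β * ε ^ 2 / 8 := le_trans hmul hδ2
    linarith [hk, ha1, ha2, hchain]
  have hsq : ‖m p.1 p.2 - m₀‖ ^ 2 ≤ ε ^ 2 / 2 := by
    have h2β : 0 < β / 2 := by positivity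
    nlinarith
  rw [dist_eq_norm]
  nlinarith [norm_nonneg (m p.1 p.2 - m₀), hε, hsq]
end

section
/- Let d ≥ 1, γ > 0, g ≥ 0, and w = (w₁,…,w_d), u = (u₁,…,u_d) ∈ ℝ^d. Then γ^{−1}( [½‖w + √γ·u‖₂² + g‖w + √γ·u‖₁] − [½‖w‖₂² + g‖w‖₁] − ⟨√γ·u, w⟩ ) = ½‖u‖₂² + (g/√γ)·( Σ_{j=1}^d u_j·sgn(w_j)·1{w_j ≠ 0} + Σ_{j=1}^d |u_j|·1{w_j = 0} ) + γ^{−1}·g·Σ_{j : w_j ≠ 0} R_j, where for each j with w_j ≠ 0 the remainder R_j := 2∫₀^{−√γ u_j} ( 1{w_j ≤ s} − 1{w_j ≤ 0} ) ds satisfies |R_j| ≤ 2·1{ 0 < |w_j| ≤ √γ|u_j| }·( √γ|u_j| − |w_j| ). -/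
/-!
For `a ≠ 0` and `ε = sign a`, `|a + v| - |a| - v ε = |a + v| - ε (a + v) = 2 (-ε (a + v))₊`,
twice the overshoot of `a + v` past zero. Since `s ↦ 1{a ≤ s}` is the right derivative of
`t ↦ max t a`, the remainder integral evaluates to exactly this overshoot, which vanishes unless
`|a| < |v|` and never exceeds `|v| - |a|`.
-/

open Set intervalIntegral

noncomputable def knightRemainder (a v : ℝ) : ℝ :=
  2 * ∫ s in (0:ℝ)..(-v), ((if a ≤ s then (1:ℝ) else 0) - (if a ≤ 0 then (1:ℝ) else 0))

lemma monotone_step (a : ℝ) : Monotone fun s : ℝ => if a ≤ s then (1:ℝ) else 0 := by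
  intro x y hxy
  dsimp only
  split_ifs with hx hy
  · exact le_rfl
  · exact absurd (hx.trans hxy) hy
  · exact zero_le_one
  · exact le_rfl

lemma hasDerivWithinAt_max_const_Ioi (a x : ℝ) :
    HasDerivWithinAt (fun t => max t a) (if a ≤ x then 1 else 0) (Ioi x) x := by
  split_ifs with hax
  · exact (hasDerivWithinAt_id x _).congr (fun t ht => max_eq_left (hax.trans ht.le))
      (max_eq_left hax)
  · have hxa : x < a := not_le.mp hax
    refine (hasDerivWithinAt_const x _ a).congr_of_eventuallyEq ?_ (max_eq_right hxa.le)
    filter_upwards [nhdsWithin_le_nhds (Iio_mem_nhds hxa)] with t ht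
    exact max_eq_right ht.le

lemma integral_step (a x y : ℝ) :
    ∫ s in x..y, (if a ≤ s then (1:ℝ) else 0) = max y a - max x a :=
  integral_eq_sub_of_hasDeriv_right (continuous_id.max continuous_const).continuousOn
    (fun t _ => hasDerivWithinAt_max_const_Ioi a t) ((monotone_step a).intervalIntegrable)

lemma knightRemainder_eq_max (a v : ℝ) :
    knightRemainder a v = 2 * (max (-v) a - max 0 a + (if a ≤ 0 then v else 0)) := by
  rw [knightRemainder, integral_sub (monotone_step a).intervalIntegrable intervalIntegrable_const,
    integral_step, integral_const, smul_eq_mul]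
  split_ifs <;> ring

lemma knightRemainder_of_pos {a : ℝ} (ha : 0 < a) (v : ℝ) :
    knightRemainder a v = 2 * max (-(a + v)) 0 := by
  rw [knightRemainder_eq_max, if_neg (not_le.mpr ha), max_eq_right ha.le]
  rcases le_total (-v) a with h | h
  · rw [max_eq_right h, max_eq_right (by linarith)]; ring
  · rw [max_eq_left h, max_eq_left (by linarith)]; ring

lemma knightRemainder_of_neg {a : ℝ} (ha : a < 0) (v : ℝ) :
    knightRemainder a v = 2 * max (a + v) 0 := by
  rw [knightRemainder_eq_max, if_pos ha.le, max_eq_left ha.le]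
  rcases le_total (-v) a with h | h
  · rw [max_eq_right h, max_eq_left (by linarith)]; ring
  · rw [max_eq_left h, max_eq_right (by linarith)]; ring

theorem abs_add_sub_abs_eq_knight (a v : ℝ) :
    |a + v| - |a| = v * Real.sign a * (if a ≠ 0 then (1:ℝ) else 0)
      + |v| * (if a = 0 then (1:ℝ) else 0) + (if a = 0 then (0:ℝ) else knightRemainder a v) := by
  rcases lt_trichotomy a 0 with ha | rfl | ha
  · rw [knightRemainder_of_neg ha, Real.sign_of_neg ha, if_pos ha.ne, if_neg ha.ne, if_neg ha.ne,
      abs_of_neg ha]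
    rcases le_total (a + v) 0 with h | h
    · rw [abs_of_nonpos h, max_eq_right h]; ring
    · rw [abs_of_nonneg h, max_eq_left h]; ring
  · simp
  · rw [knightRemainder_of_pos ha, Real.sign_of_pos ha, if_pos ha.ne', if_neg ha.ne',
      if_neg ha.ne', abs_of_pos ha]
    rcases le_total (a + v) 0 with h | h
    · rw [abs_of_nonpos h, max_eq_left (neg_nonneg.mpr h)]; ring
    · rw [abs_of_nonneg h, max_eq_right (neg_nonpos.mpr h)]; ring

theorem abs_knightRemainder_le {a : ℝ} (ha : a ≠ 0) (v : ℝ) :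
    |knightRemainder a v|
      ≤ 2 * (if 0 < |a| ∧ |a| ≤ |v| then (1:ℝ) else 0) * (|v| - |a|) := by
  have hR : knightRemainder a v = 2 * max (-|a| - Real.sign a * v) 0 := by
    rcases ha.lt_or_gt with ha | ha
    · rw [knightRemainder_of_neg ha, abs_of_neg ha, Real.sign_of_neg ha]; ring_nf
    · rw [knightRemainder_of_pos ha, abs_of_pos ha, Real.sign_of_pos ha]; ring_nf
  have hsv : -|v| ≤ Real.sign a * v := by
    rcases ha.lt_or_gt with ha | ha
    · simp [Real.sign_of_neg ha, le_abs_self]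
    · simp [Real.sign_of_pos ha, neg_abs_le]
  rw [hR, abs_of_nonneg (by positivity)]
  split_ifs with h
  · rw [mul_one]
    gcongr
    exact max_le (by linarith) (by linarith [h.2])
  · have hav : |v| < |a| := not_le.mp (not_and.mp h (abs_pos.mpr ha))
    rw [max_eq_right (by linarith)]
    simp

theorem stmt8_general {d : ℕ} {γ g : ℝ} (hγ : 0 < γ)
    (w u : Fin d → ℝ) (R : Fin d → ℝ)
    (hR : ∀ j, R j = 2 * ∫ s in (0:ℝ)..(-(Real.sqrt γ * u j)),
      ((if w j ≤ s then (1:ℝ) else 0) - (if w j ≤ 0 then (1:ℝ) else 0))) :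
    (γ⁻¹ * (((1/2) * ∑ j, (w j + Real.sqrt γ * u j)^2 + g * ∑ j, |w j + Real.sqrt γ * u j|)
        - ((1/2) * ∑ j, (w j)^2 + g * ∑ j, |w j|)
        - ∑ j, (Real.sqrt γ * u j) * w j)
      = (1/2) * ∑ j, (u j)^2
        + (g / Real.sqrt γ) *
            ((∑ j, u j * Real.sign (w j) * (if w j ≠ 0 then (1:ℝ) else 0))
              + ∑ j, |u j| * (if w j = 0 then (1:ℝ) else 0))
        + γ⁻¹ * g * ∑ j, (if w j = 0 then (0:ℝ) else R j)) ∧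
    (∀ j, w j ≠ 0 →
      |R j| ≤ 2 * (if 0 < |w j| ∧ |w j| ≤ Real.sqrt γ * |u j| then (1:ℝ) else 0)
        * (Real.sqrt γ * |u j| - |w j|)) := by
  have hs : 0 < Real.sqrt γ := Real.sqrt_pos.mpr hγ
  have habs : ∀ j, |Real.sqrt γ * u j| = Real.sqrt γ * |u j| := fun j => by
    rw [abs_mul, abs_of_pos hs]
  have hRk : ∀ j, R j = knightRemainder (w j) (Real.sqrt γ * u j) := hR
  refine ⟨?_, fun j hj => hRk j ▸ habs j ▸ abs_knightRemainder_le hj _⟩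
  have hγs : Real.sqrt γ ^ 2 = γ := Real.sq_sqrt hγ.le
  simp only [Finset.mul_sum, ← Finset.sum_add_distrib, ← Finset.sum_sub_distrib]
  refine Finset.sum_congr rfl fun j _ => ?_
  have hj := abs_add_sub_abs_eq_knight (w j) (Real.sqrt γ * u j)
  rw [habs, ← hRk] at hj
  generalize Real.sqrt γ = σ at *
  subst hγs
  field_simp
  linear_combination (2 * g) * hj

/-- STATEMENT 8 (Knight's identity for the localized Bregman divergence of
`½‖·‖₂² + g‖·‖₁`), together with the bound on the remainder terms. -/
theorem stmt8 {d : ℕ} (hd : 1 ≤ d) {γ g : ℝ} (hγ : 0 < γ) (hg : 0 ≤ g)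
    (w u : Fin d → ℝ) (R : Fin d → ℝ)
    (hR : ∀ j, R j = 2 * ∫ s in (0:ℝ)..(-(Real.sqrt γ * u j)),
      ((if w j ≤ s then (1:ℝ) else 0) - (if w j ≤ 0 then (1:ℝ) else 0))) :
    (γ⁻¹ * (((1/2) * ∑ j, (w j + Real.sqrt γ * u j)^2 + g * ∑ j, |w j + Real.sqrt γ * u j|)
        - ((1/2) * ∑ j, (w j)^2 + g * ∑ j, |w j|)
        - ∑ j, (Real.sqrt γ * u j) * w j)
      = (1/2) * ∑ j, (u j)^2
        + (g / Real.sqrt γ) *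
            ((∑ j, u j * Real.sign (w j) * (if w j ≠ 0 then (1:ℝ) else 0))
              + ∑ j, |u j| * (if w j = 0 then (1:ℝ) else 0))
        + γ⁻¹ * g * ∑ j, (if w j = 0 then (0:ℝ) else R j)) ∧
    (∀ j, w j ≠ 0 →
      |R j| ≤ 2 * (if 0 < |w j| ∧ |w j| ≤ Real.sqrt γ * |u j| then (1:ℝ) else 0)
        * (Real.sqrt γ * |u j| - |w j|)) :=
  stmt8_general hγ w u R hR
end

section
/- Let σ > 0, c₀ > 0 and w* ∈ ℝ. Define the time-varying soft-thresholding operator S(t, x) := sgn(x)·max(|x| − c₀·t, 0) for t ≥ 0, x ∈ ℝ. Suppose v : [0,∞) → ℝ is differentiable with v′(t) = −σ²·( S(t, v(t)) − w* ) for all t > 0, let w(t) := S(t, v(t)), and suppose w(t) converges to a limit w^∞ ≠ 0 as t → ∞. Then |w^∞ − w*| = c₀/σ². -/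
/-!
Once `w(t)` has a nonzero limit `w^∞`, the thresholding is eventually active with the fixed
sign `s = sgn w^∞`, so `w(t) = v(t) - s c₀ t` for large `t`. Then `v(t) - s c₀ t` converges,
while its derivative `-σ²(w(t) - w*) - s c₀` converges to `-σ²(w^∞ - w*) - s c₀`.
By the mean value theorem on `[t, t + 1]`, a convergent function whose derivative converges
has derivative tending to `0`, which gives `w^∞ - w* = -s c₀ / σ²`.
-/

open Filter Topology

theorem eq_zero_of_tendsto_of_hasDerivAt {g φ : ℝ → ℝ} {L M : ℝ}
    (hg : ∀ᶠ t in atTop, HasDerivAt g (φ t) t)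
    (hgL : Tendsto g atTop (𝓝 L)) (hφM : Tendsto φ atTop (𝓝 M)) : M = 0 := by
  obtain ⟨T, hT⟩ := eventually_atTop.1 hg
  have hmvt : ∀ t, ∃ ξ, T ≤ t → ξ ∈ Set.Ioo t (t + 1) ∧ φ ξ = g (t + 1) - g t := by
    intro t
    by_cases ht : T ≤ t
    · have hderiv : ∀ x ∈ Set.Ioo t (t + 1), HasDerivAt g (φ x) x :=
        fun x hx => hT x (ht.trans hx.1.le)
      have hcont : ContinuousOn g (Set.Icc t (t + 1)) :=
        fun x hx => (hT x (ht.trans hx.1)).continuousAt.continuousWithinAt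
      obtain ⟨ξ, hξ, hφξ⟩ := exists_hasDerivAt_eq_slope g φ (lt_add_one t) hcont hderiv
      exact ⟨ξ, fun _ => ⟨hξ, by rw [hφξ, add_sub_cancel_left, div_one]⟩⟩
    · exact ⟨0, fun h => absurd h ht⟩
  choose ξ hξ using hmvt
  have hξ_top : Tendsto ξ atTop atTop :=
    tendsto_atTop_mono' atTop (eventually_ge_atTop T |>.mono fun t ht => (hξ t ht).1.1.le)
      tendsto_id
  have hslope : Tendsto (fun t => g (t + 1) - g t) atTop (𝓝 0) := by
    simpa using (hgL.comp (tendsto_atTop_add_const_right _ 1 tendsto_id)).sub hgL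
  refine tendsto_nhds_unique (hφM.comp hξ_top) (hslope.congr' ?_)
  filter_upwards [eventually_ge_atTop T] with t ht
  exact ((hξ t ht).2).symm

theorem Real.eventually_sign_eq_of_tendsto {α : Type*} {l : Filter α} {f : α → ℝ} {a : ℝ}
    (hf : Tendsto f l (𝓝 a)) (ha : a ≠ 0) : ∀ᶠ x in l, Real.sign (f x) = Real.sign a := by
  rcases ha.lt_or_gt with ha | ha
  · filter_upwards [hf.eventually (gt_mem_nhds ha)] with x hx
    rw [Real.sign_of_neg hx, Real.sign_of_neg ha]
  · filter_upwards [hf.eventually (lt_mem_nhds ha)] with x hx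
    rw [Real.sign_of_pos hx, Real.sign_of_pos ha]

noncomputable def softThreshold (a x : ℝ) : ℝ := Real.sign x * max (|x| - a) 0

theorem softThreshold_eq_sub_mul_sign {a x : ℝ} (h : softThreshold a x ≠ 0) :
    softThreshold a x = x - a * Real.sign (softThreshold a x) := by
  unfold softThreshold at h ⊢
  have hx : x ≠ 0 := by rintro rfl; simp at h
  have hmax : max (|x| - a) 0 = |x| - a :=
    max_eq_left (not_lt.1 fun hlt => h (by rw [max_eq_right hlt.le, mul_zero]))
  rw [hmax] at h ⊢
  have hpos : 0 < |x| - a :=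
    lt_of_le_of_ne (hmax ▸ le_max_right _ _) (right_ne_zero_of_mul h).symm
  rcases hx.lt_or_gt with hx | hx
  · rw [abs_of_neg hx] at hpos ⊢
    rw [Real.sign_of_neg hx, Real.sign_of_neg (by linarith)]
    ring
  · rw [abs_of_pos hx] at hpos ⊢
    rw [Real.sign_of_pos hx, Real.sign_of_pos (by linarith)]
    ring

theorem stmt10_general {σ c₀ : ℝ} (hσ : 0 < σ) (hc₀ : 0 < c₀) (wstar : ℝ)
    (v : ℝ → ℝ)
    (hode : ∀ t : ℝ, 0 < t →
      HasDerivAt v (-(σ ^ 2) * (Real.sign (v t) * max (|v t| - c₀ * t) 0 - wstar)) t)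
    (winf : ℝ) (hwinf : winf ≠ 0)
    (hlim : Filter.Tendsto (fun t => Real.sign (v t) * max (|v t| - c₀ * t) 0)
      Filter.atTop (nhds winf)) :
    |winf - wstar| = c₀ / σ ^ 2 := by
  set w : ℝ → ℝ := fun t => softThreshold (c₀ * t) (v t)
  replace hlim : Tendsto w atTop (𝓝 winf) := hlim
  replace hode : ∀ t, 0 < t → HasDerivAt v (-(σ ^ 2) * (w t - wstar)) t := hode
  set s := Real.sign winf
  have hw : ∀ᶠ t in atTop, w t = v t - c₀ * s * t := by
    filter_upwards [Real.eventually_sign_eq_of_tendsto hlim hwinf,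
      hlim.eventually_ne hwinf] with t hsign hne
    calc w t = v t - c₀ * t * Real.sign (w t) := softThreshold_eq_sub_mul_sign hne
      _ = v t - c₀ * s * t := by rw [hsign]; ring
  have hderiv : ∀ᶠ t in atTop,
      HasDerivAt (fun t => v t - c₀ * s * t) (-(σ ^ 2) * (w t - wstar) - c₀ * s) t := by
    filter_upwards [eventually_gt_atTop 0] with t ht
    exact (hode t ht).sub (((hasDerivAt_id' t).const_mul (c₀ * s)).congr_deriv (mul_one _))
  have hbalance : -(σ ^ 2) * (winf - wstar) - c₀ * s = 0 :=
    eq_zero_of_tendsto_of_hasDerivAt hderiv (hlim.congr' hw)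
      (((hlim.sub_const wstar).const_mul _).sub_const _)
  have hs : |s| = 1 := by
    rcases Real.sign_apply_eq_of_ne_zero winf hwinf with h | h <;> simp [s, h]
  rw [show winf - wstar = -(c₀ * s) / σ ^ 2 by field_simp; linarith, abs_div, abs_neg,
    abs_mul, hs, mul_one, abs_of_pos hc₀, abs_of_pos (by positivity)]

/-- the mean-dynamics of RDA with ℓ₁ penalty strength `c₀` on a
single coordinate of a least-squares regression is asymptotically biased:
if `w(t) = S(t, v(t))` converges to `w^∞ ≠ 0`, then `|w^∞ − w*| = c₀/σ²`,
where `S(t,x) = sgn(x)·(|x| − c₀t)₊` is the time-varying soft-thresholding operator. -/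
theorem stmt10 {σ c₀ : ℝ} (hσ : 0 < σ) (hc₀ : 0 < c₀) (wstar : ℝ)
    (v : ℝ → ℝ) (hv : ContinuousOn v (Set.Ici 0))
    (hode : ∀ t : ℝ, 0 < t →
      HasDerivAt v (-(σ ^ 2) * (Real.sign (v t) * max (|v t| - c₀ * t) 0 - wstar)) t)
    (winf : ℝ) (hwinf : winf ≠ 0)
    (hlim : Filter.Tendsto (fun t => Real.sign (v t) * max (|v t| - c₀ * t) 0)
      Filter.atTop (nhds winf)) :
    |winf - wstar| = c₀ / σ ^ 2 :=
  stmt10_general hσ hc₀ wstar v hode winf hwinf hlim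
end

section
/- Let μ > 0 and x ≥ 0. Then e^{−x}·∫₀^{x} u^{μ−1}·e^{u} du = Σ_{k=0}^{∞} (−1)^k · x^{μ+k} / ( μ·(μ+1)·(μ+2)⋯(μ+k) ), where the series on the right converges absolutely. -/
/-!
Writing `e^{-x} e^u = e^{-(x-u)}` and expanding in powers of `x - u`, the left-hand side becomes
`∑ₖ (-1)^k/k! ∫₀^x u^{μ-1} (x-u)^k du`. Each of these integrals is a scaled Beta integral,
`x^{μ+k} B(μ, k+1) = x^{μ+k} k!/(μ(μ+1)⋯(μ+k))`, which gives the series termwise. The integrals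
of the absolute values of the summands are the absolute values of the terms of the series, which
are dominated by `x^μ/μ · x^k/k!`; this justifies the interchange of sum and integral.
-/

open Finset Nat MeasureTheory

theorem mul_factorial_le_prod_range_add {μ : ℝ} (hμ : 0 ≤ μ) (k : ℕ) :
    μ * k ! ≤ ∏ i ∈ range (k + 1), (μ + i) := by
  rw [prod_range_succ', ← prod_range_add_one_eq_factorial, mul_comm]
  push_cast
  rw [add_zero]
  exact mul_le_mul_of_nonneg_right
    (prod_le_prod (fun i _ => by positivity) (fun i _ => by linarith)) hμ

theorem summable_abs_rpow_add_div_prod {μ x : ℝ} (hμ : 0 < μ) (hx : 0 ≤ x) :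
    Summable fun k : ℕ => |(-1 : ℝ) ^ k * x ^ (μ + k) / ∏ i ∈ range (k + 1), (μ + i)| := by
  refine Summable.of_nonneg_of_le (fun _ => abs_nonneg _) (fun k => ?_)
    ((Real.summable_pow_div_factorial x).mul_left (x ^ μ / μ))
  have hprod : 0 < ∏ i ∈ range (k + 1), (μ + i) := prod_pos fun i _ => by positivity
  rw [abs_div, abs_mul, abs_pow, abs_neg, abs_one, one_pow, one_mul,
    abs_of_nonneg (Real.rpow_nonneg hx _), abs_of_pos hprod,
    Real.rpow_add_natCast' hx (by positivity), div_mul_div_comm (x ^ μ) μ]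
  gcongr
  exact mul_factorial_le_prod_range_add hμ.le k

theorem integral_rpow_mul_sub_pow {μ x : ℝ} (hμ : 0 < μ) (hx : 0 ≤ x) (k : ℕ) :
    ∫ u in (0:ℝ)..x, u ^ (μ - 1) * (x - u) ^ k
      = k ! * x ^ (μ + k) / ∏ i ∈ range (k + 1), (μ + i) := by
  obtain rfl | hx := hx.eq_or_lt
  · rw [intervalIntegral.integral_same, Real.zero_rpow (by positivity), mul_zero, zero_div]
  have hbeta := Complex.betaIntegral_scaled μ (k + 1) hx
  rw [Complex.betaIntegral_eval_nat_add_one_right (by simpa using hμ)] at hbeta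
  apply Complex.ofReal_injective
  rw [← intervalIntegral.integral_ofReal]
  have hpt : ∀ u ∈ Set.uIcc 0 x, ((u ^ (μ - 1) * (x - u) ^ k : ℝ) : ℂ)
      = (u : ℂ) ^ ((μ : ℂ) - 1) * ((x : ℂ) - u) ^ ((k + 1 : ℂ) - 1) := by
    intro u hu
    rw [Set.uIcc_of_le hx.le] at hu
    rw [add_sub_cancel_right, Complex.cpow_natCast]
    push_cast [Complex.ofReal_cpow hu.1]
    rfl
  rw [intervalIntegral.integral_congr hpt, hbeta]
  push_cast [Complex.ofReal_cpow hx.le]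
  ring_nf

theorem hasSum_rpow_mul_exp_sub (μ x u : ℝ) :
    HasSum (fun k : ℕ => (-1 : ℝ) ^ k / k ! * (u ^ (μ - 1) * (x - u) ^ k))
      (u ^ (μ - 1) * Real.exp (u - x)) := by
  have hexp : HasSum (fun k : ℕ => (u - x) ^ k / k !) (Real.exp (u - x)) := by
    simpa [Real.exp_eq_exp_ℝ] using NormedSpace.expSeries_div_hasSum_exp (u - x)
  have hterm (k : ℕ) : (-1 : ℝ) ^ k / k ! * (u ^ (μ - 1) * (x - u) ^ k)
      = u ^ (μ - 1) * ((u - x) ^ k / k !) := by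
    rw [← neg_sub x u, neg_pow (x - u)]
    ring
  simpa only [hterm] using hexp.mul_left (u ^ (μ - 1))

section

variable {μ x : ℝ} (hμ : 0 < μ) (hx : 0 ≤ x) (k : ℕ)
include hμ hx

theorem integrableOn_neg_one_pow_div_factorial_mul :
    IntegrableOn (fun u => (-1 : ℝ) ^ k / k ! * (u ^ (μ - 1) * (x - u) ^ k)) (Set.Ioc 0 x) :=
  (intervalIntegrable_iff_integrableOn_Ioc_of_le hx).mp <|
    ((intervalIntegral.intervalIntegrable_rpow' (by linarith)).mul_continuousOn
      (by fun_prop)).const_mul _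

theorem integral_neg_one_pow_div_factorial_mul :
    ∫ u in (0:ℝ)..x, (-1 : ℝ) ^ k / k ! * (u ^ (μ - 1) * (x - u) ^ k)
      = (-1 : ℝ) ^ k * x ^ (μ + k) / ∏ i ∈ range (k + 1), (μ + i) := by
  rw [intervalIntegral.integral_const_mul, integral_rpow_mul_sub_pow hμ hx]
  field_simp

theorem integral_norm_neg_one_pow_div_factorial_mul :
    ∫ u in Set.Ioc 0 x, ‖(-1 : ℝ) ^ k / k ! * (u ^ (μ - 1) * (x - u) ^ k)‖
      = |(-1 : ℝ) ^ k * x ^ (μ + k) / ∏ i ∈ range (k + 1), (μ + i)| := by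
  have hg : ∀ u ∈ Set.Ioc 0 x, 0 ≤ u ^ (μ - 1) * (x - u) ^ k := fun u hu =>
    mul_nonneg (Real.rpow_nonneg hu.1.le _) (pow_nonneg (sub_nonneg.mpr hu.2) _)
  calc ∫ u in Set.Ioc 0 x, ‖(-1 : ℝ) ^ k / k ! * (u ^ (μ - 1) * (x - u) ^ k)‖
      = ∫ u in Set.Ioc 0 x, |(-1 : ℝ) ^ k / k !| * (u ^ (μ - 1) * (x - u) ^ k) :=
        setIntegral_congr_fun measurableSet_Ioc fun u hu => by
          rw [Real.norm_eq_abs, abs_mul, abs_of_nonneg (hg u hu)]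
    _ = |∫ u in Set.Ioc 0 x, (-1 : ℝ) ^ k / k ! * (u ^ (μ - 1) * (x - u) ^ k)| := by
        rw [integral_const_mul, integral_const_mul, abs_mul,
          abs_of_nonneg (setIntegral_nonneg measurableSet_Ioc hg)]
    _ = _ := by
        rw [← intervalIntegral.integral_of_le hx, integral_neg_one_pow_div_factorial_mul hμ hx]

end

/-- for `μ > 0` and `x ≥ 0`,
`e^{−x}∫₀^x u^{μ−1}e^u du = Σ_{k=0}^∞ (−1)^k x^{μ+k} / (μ(μ+1)⋯(μ+k))`,
the series converging absolutely. -/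
theorem stmt13 {μ : ℝ} (hμ : 0 < μ) (x : ℝ) (hx : 0 ≤ x) :
    Summable (fun k : ℕ =>
      |(-1 : ℝ) ^ k * x ^ (μ + k) / ∏ i ∈ Finset.range (k + 1), (μ + i)|) ∧
    Real.exp (-x) * ∫ u in (0:ℝ)..x, u ^ (μ - 1) * Real.exp u
      = ∑' k : ℕ, (-1 : ℝ) ^ k * x ^ (μ + k) / ∏ i ∈ Finset.range (k + 1), (μ + i) := by
  have hsum := summable_abs_rpow_add_div_prod hμ hx
  refine ⟨hsum, ?_⟩
  calc Real.exp (-x) * ∫ u in (0:ℝ)..x, u ^ (μ - 1) * Real.exp u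
      = ∫ u in Set.Ioc 0 x, u ^ (μ - 1) * Real.exp (u - x) := by
        rw [← intervalIntegral.integral_const_mul, intervalIntegral.integral_of_le hx]
        congr with u
        rw [Real.exp_sub, Real.exp_neg]
        ring
    _ = ∫ u in Set.Ioc 0 x, ∑' k : ℕ, (-1 : ℝ) ^ k / k ! * (u ^ (μ - 1) * (x - u) ^ k) := by
        congr with u
        exact (hasSum_rpow_mul_exp_sub μ x u).tsum_eq.symm
    _ = ∑' k : ℕ, (-1 : ℝ) ^ k * x ^ (μ + k) / ∏ i ∈ range (k + 1), (μ + i) := by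
        rw [← integral_tsum_of_summable_integral_norm
          (integrableOn_neg_one_pow_div_factorial_mul hμ hx)
          (hsum.congr fun k => (integral_norm_neg_one_pow_div_factorial_mul hμ hx k).symm)]
        congr with k
        rw [← intervalIntegral.integral_of_le hx, integral_neg_one_pow_div_factorial_mul hμ hx]
end

section
/- Let σ > 0, c > 0, μ > 0 and t₀ ≥ 0, and for t > t₀ define h(t) := −c·μ·e^{−σ² t}·∫_{t₀}^{t} (s − t₀)^{μ−1}·e^{σ² s} ds. Then as t → ∞: (i) if 0 < μ < 1, h(t) → 0; (ii) if μ = 1, h(t) → −c·σ^{−2}; (iii) if μ > 1, h(t) → −∞. -/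
open Filter

/-- trichotomy for the long-run limit of the bias term
`h(t) = −cμ e^{−σ²t} ∫_{t₀}^t (s−t₀)^{μ−1} e^{σ²s} ds` as `t → ∞`:
it tends to `0` if `μ < 1`, to `−c/σ²` if `μ = 1`, and to `−∞` if `μ > 1`. -/
theorem stmt15 {σ c μ t₀ : ℝ} (hσ : 0 < σ) (hc : 0 < c) (hμ : 0 < μ) (ht₀ : 0 ≤ t₀)
    (h : ℝ → ℝ)
    (hh : ∀ t : ℝ, t₀ < t → h t = -(c * μ * Real.exp (-(σ ^ 2) * t))
      * ∫ s in t₀..t, (s - t₀) ^ (μ - 1) * Real.exp (σ ^ 2 * s)) :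
    (μ < 1 → Tendsto h atTop (nhds 0)) ∧
    (μ = 1 → Tendsto h atTop (nhds (-(c / σ ^ 2)))) ∧
    (1 < μ → Tendsto h atTop atBot) := by
  have hk : (0:ℝ) < σ ^ 2 := by positivity
  have hμ1 : (-1:ℝ) < μ - 1 := by linarith
  -- integrability of the power factor
  have hint1 : ∀ a b : ℝ, IntervalIntegrable (fun s : ℝ => (s - t₀) ^ (μ - 1))
      MeasureTheory.volume a b := by
    intro a b
    have h2 := (intervalIntegral.intervalIntegrable_rpow' (a := a - t₀) (b := b - t₀) hμ1).comp_sub_right t₀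
    simpa using h2
  -- integrability of the full integrand
  have hint : ∀ a b : ℝ, IntervalIntegrable
      (fun s : ℝ => (s - t₀) ^ (μ - 1) * Real.exp (σ ^ 2 * s)) MeasureTheory.volume a b := by
    intro a b
    exact (hint1 a b).mul_continuousOn
      (Continuous.continuousOn (Real.continuous_exp.comp (continuous_const.mul continuous_id)))
  -- integral of the power factor
  have hrpowint : ∀ a : ℝ, t₀ ≤ a →
      (∫ s in t₀..a, (s - t₀) ^ (μ - 1)) = (a - t₀) ^ μ / μ := by
    intro a _
    rw [intervalIntegral.integral_comp_sub_right (fun u : ℝ => u ^ (μ - 1)) t₀]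
    rw [integral_rpow (Or.inl hμ1)]
    have hms : μ - 1 + 1 = μ := by ring
    rw [hms, sub_self, Real.zero_rpow hμ.ne', sub_zero]
  -- integral of the exponential
  have hexp : ∀ a b : ℝ, (∫ s in a..b, Real.exp (σ ^ 2 * s))
      = (Real.exp (σ ^ 2 * b) - Real.exp (σ ^ 2 * a)) / σ ^ 2 := by
    intro a b
    rw [intervalIntegral.integral_comp_mul_left (fun u : ℝ => Real.exp u) hk.ne']
    rw [integral_exp]
    rw [smul_eq_mul]
    field_simp
  -- nonnegativity of the integral
  have hInn : ∀ t : ℝ, t₀ ≤ t →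
      0 ≤ ∫ s in t₀..t, (s - t₀) ^ (μ - 1) * Real.exp (σ ^ 2 * s) := by
    intro t ht
    apply intervalIntegral.integral_nonneg ht
    intro s hs
    exact mul_nonneg (Real.rpow_nonneg (by linarith [hs.1]) _) (Real.exp_pos _).le
  -- eventual form of h
  have hhev : ∀ᶠ t in atTop, h t = -(c * μ) *
      (Real.exp (-(σ ^ 2 * t)) * ∫ s in t₀..t, (s - t₀) ^ (μ - 1) * Real.exp (σ ^ 2 * s)) := by
    filter_upwards [eventually_gt_atTop t₀] with t ht
    rw [hh t ht]
    simp only [neg_mul]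
    ring
  -- τ(t) = (t - t₀)/2 tends to atTop
  have htau : Tendsto (fun t : ℝ => (t - t₀) / 2) atTop atTop := by
    apply Tendsto.atTop_div_const (by norm_num : (0:ℝ) < 2)
    exact (tendsto_atTop_add_const_right atTop (-t₀) tendsto_id).congr
      (fun x => by simp [sub_eq_add_neg])
  -- key exponential identities for t > t₀
  have he1 : ∀ t : ℝ, Real.exp (-(σ ^ 2 * t)) * Real.exp (σ ^ 2 * ((t₀ + t) / 2))
      = Real.exp (-(σ ^ 2 * ((t - t₀) / 2))) := by
    intro t; rw [← Real.exp_add]; congr 1; ring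
  have he2 : ∀ t : ℝ, Real.exp (-(σ ^ 2 * t)) * Real.exp (σ ^ 2 * t) = 1 := by
    intro t; rw [← Real.exp_add]; simp
  -- splitting of the integral and bounds on the two pieces
  have hsplit : ∀ t : ℝ, t₀ < t →
      (∫ s in t₀..t, (s - t₀) ^ (μ - 1) * Real.exp (σ ^ 2 * s))
        = (∫ s in t₀..((t₀ + t) / 2), (s - t₀) ^ (μ - 1) * Real.exp (σ ^ 2 * s))
        + ∫ s in ((t₀ + t) / 2)..t, (s - t₀) ^ (μ - 1) * Real.exp (σ ^ 2 * s) := by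
    intro t _
    exact (intervalIntegral.integral_add_adjacent_intervals (hint _ _) (hint _ _)).symm
  refine ⟨?_, ?_, ?_⟩
  · -- case μ < 1
    intro hμlt
    -- upper bound on G t
    have key : ∀ t : ℝ, t₀ < t →
        Real.exp (-(σ ^ 2 * t)) * (∫ s in t₀..t, (s - t₀) ^ (μ - 1) * Real.exp (σ ^ 2 * s))
          ≤ Real.exp (-(σ ^ 2 * ((t - t₀) / 2))) * (((t - t₀) / 2) ^ μ / μ)
            + ((t - t₀) / 2) ^ (μ - 1) / σ ^ 2 := by
      intro t ht
      set m : ℝ := (t₀ + t) / 2 with hm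
      set τ : ℝ := (t - t₀) / 2 with hτ
      have hτpos : 0 < τ := by simp [hτ]; linarith
      have ht₀m : t₀ ≤ m := by simp [hm]; linarith
      have hmt : m ≤ t := by simp [hm]; linarith
      have hmτ : m - t₀ = τ := by simp [hm, hτ]; ring
      have hA : (∫ s in t₀..m, (s - t₀) ^ (μ - 1) * Real.exp (σ ^ 2 * s))
          ≤ Real.exp (σ ^ 2 * m) * (τ ^ μ / μ) := by
        have h1 : (∫ s in t₀..m, (s - t₀) ^ (μ - 1) * Real.exp (σ ^ 2 * s))
            ≤ ∫ s in t₀..m, (s - t₀) ^ (μ - 1) * Real.exp (σ ^ 2 * m) := by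
          apply intervalIntegral.integral_mono_on ht₀m (hint _ _) ((hint1 t₀ m).mul_const _)
          intro s hs
          apply mul_le_mul_of_nonneg_left _ (Real.rpow_nonneg (by linarith [hs.1]) _)
          exact Real.exp_le_exp.2 (by nlinarith [hs.2])
        calc (∫ s in t₀..m, (s - t₀) ^ (μ - 1) * Real.exp (σ ^ 2 * s))
            ≤ ∫ s in t₀..m, (s - t₀) ^ (μ - 1) * Real.exp (σ ^ 2 * m) := h1
          _ = (∫ s in t₀..m, (s - t₀) ^ (μ - 1)) * Real.exp (σ ^ 2 * m) := by
              rw [intervalIntegral.integral_mul_const]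
          _ = Real.exp (σ ^ 2 * m) * (τ ^ μ / μ) := by
              rw [hrpowint m ht₀m, hmτ]; ring
      have hB : (∫ s in m..t, (s - t₀) ^ (μ - 1) * Real.exp (σ ^ 2 * s))
          ≤ τ ^ (μ - 1) * ((Real.exp (σ ^ 2 * t) - Real.exp (σ ^ 2 * m)) / σ ^ 2) := by
        have h1 : (∫ s in m..t, (s - t₀) ^ (μ - 1) * Real.exp (σ ^ 2 * s))
            ≤ ∫ s in m..t, τ ^ (μ - 1) * Real.exp (σ ^ 2 * s) := by
          apply intervalIntegral.integral_mono_on hmt (hint _ _)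
          · exact IntervalIntegrable.const_mul
              (Continuous.intervalIntegrable (Real.continuous_exp.comp (continuous_const.mul continuous_id)) m t) _
          · intro s hs
            apply mul_le_mul_of_nonneg_right _ (Real.exp_pos _).le
            apply Real.rpow_le_rpow_of_nonpos (by linarith [hτpos]) (by linarith [hs.1, hmτ])
              (by linarith)
        calc (∫ s in m..t, (s - t₀) ^ (μ - 1) * Real.exp (σ ^ 2 * s))
            ≤ ∫ s in m..t, τ ^ (μ - 1) * Real.exp (σ ^ 2 * s) := h1
          _ = τ ^ (μ - 1) * ∫ s in m..t, Real.exp (σ ^ 2 * s) := by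
              rw [intervalIntegral.integral_const_mul]
          _ = τ ^ (μ - 1) * ((Real.exp (σ ^ 2 * t) - Real.exp (σ ^ 2 * m)) / σ ^ 2) := by
              rw [hexp]
      have hE : 0 < Real.exp (-(σ ^ 2 * t)) := Real.exp_pos _
      have hτnn : (0:ℝ) ≤ τ ^ (μ - 1) := Real.rpow_nonneg hτpos.le _
      calc Real.exp (-(σ ^ 2 * t)) * (∫ s in t₀..t, (s - t₀) ^ (μ - 1) * Real.exp (σ ^ 2 * s))
          = Real.exp (-(σ ^ 2 * t)) * (∫ s in t₀..m, (s - t₀) ^ (μ - 1) * Real.exp (σ ^ 2 * s))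
            + Real.exp (-(σ ^ 2 * t)) * ∫ s in m..t, (s - t₀) ^ (μ - 1) * Real.exp (σ ^ 2 * s) := by
            rw [hsplit t ht]; ring
        _ ≤ Real.exp (-(σ ^ 2 * t)) * (Real.exp (σ ^ 2 * m) * (τ ^ μ / μ))
            + Real.exp (-(σ ^ 2 * t)) *
              (τ ^ (μ - 1) * ((Real.exp (σ ^ 2 * t) - Real.exp (σ ^ 2 * m)) / σ ^ 2)) := by
            gcongr
        _ = Real.exp (-(σ ^ 2 * τ)) * (τ ^ μ / μ)
            + τ ^ (μ - 1) * ((Real.exp (-(σ ^ 2 * t)) * Real.exp (σ ^ 2 * t)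
              - Real.exp (-(σ ^ 2 * t)) * Real.exp (σ ^ 2 * m)) / σ ^ 2) := by
            have he1' := he1 t
            rw [← hm, ← hτ] at he1'
            linear_combination (τ ^ μ / μ) * he1'
        _ ≤ Real.exp (-(σ ^ 2 * τ)) * (τ ^ μ / μ) + τ ^ (μ - 1) * (1 / σ ^ 2) := by
            gcongr
            rw [he2 t]
            have := Real.exp_pos (σ ^ 2 * m)
            nlinarith [hE, this]
        _ = Real.exp (-(σ ^ 2 * τ)) * (τ ^ μ / μ) + τ ^ (μ - 1) / σ ^ 2 := by ring
    -- limits of the upper bound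
    have hU1 : Tendsto (fun t : ℝ =>
        Real.exp (-(σ ^ 2 * ((t - t₀) / 2))) * (((t - t₀) / 2) ^ μ / μ)) atTop (nhds 0) := by
      have hb := (tendsto_rpow_mul_exp_neg_mul_atTop_nhds_zero μ (σ ^ 2) hk).comp htau
      have hb2 : Tendsto (fun t : ℝ =>
          (((t - t₀) / 2) ^ μ * Real.exp (-(σ ^ 2 * ((t - t₀) / 2)))) / μ) atTop (nhds (0 / μ)) :=
        (hb.congr (fun t => by simp only [Function.comp]; rw [neg_mul])).div_const μ
      rw [zero_div] at hb2
      exact hb2.congr (fun t => by ring)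
    have hU2 : Tendsto (fun t : ℝ => ((t - t₀) / 2) ^ (μ - 1) / σ ^ 2) atTop (nhds 0) := by
      have hb := (tendsto_rpow_neg_atTop (y := 1 - μ) (by linarith)).comp htau
      have hb2 : Tendsto (fun t : ℝ => ((t - t₀) / 2) ^ (μ - 1)) atTop (nhds 0) := by
        refine hb.congr (fun t => ?_)
        simp only [Function.comp]
        congr 1
        ring
      simpa using hb2.div_const (σ ^ 2)
    have hG : Tendsto (fun t : ℝ =>
        Real.exp (-(σ ^ 2 * t)) * ∫ s in t₀..t, (s - t₀) ^ (μ - 1) * Real.exp (σ ^ 2 * s))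
        atTop (nhds 0) := by
      apply tendsto_of_tendsto_of_tendsto_of_le_of_le' tendsto_const_nhds
        (by simpa using hU1.add hU2)
      · filter_upwards [eventually_gt_atTop t₀] with t ht
        exact mul_nonneg (Real.exp_pos _).le (hInn t ht.le)
      · filter_upwards [eventually_gt_atTop t₀] with t ht
        exact key t ht
    have := hG.const_mul (-(c * μ))
    rw [mul_zero] at this
    exact Tendsto.congr' (hhev.mono fun t ht => ht.symm) this
  · -- case μ = 1
    intro hμeq
    subst hμeq
    have hev : ∀ᶠ t in atTop, h t
        = -(c / σ ^ 2) * (1 - Real.exp (σ ^ 2 * t₀) * Real.exp (-(σ ^ 2 * t))) := by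
      filter_upwards [eventually_gt_atTop t₀] with t ht
      have hI : (∫ s in t₀..t, (s - t₀) ^ ((1:ℝ) - 1) * Real.exp (σ ^ 2 * s))
          = (Real.exp (σ ^ 2 * t) - Real.exp (σ ^ 2 * t₀)) / σ ^ 2 := by
        rw [show (1:ℝ) - 1 = 0 by norm_num]
        simp only [Real.rpow_zero, one_mul]
        exact hexp t₀ t
      rw [hh t ht, hI]
      simp only [neg_mul]
      have e1 : Real.exp (-(σ ^ 2 * t)) * Real.exp (σ ^ 2 * t) = 1 := he2 t
      field_simp
      nlinarith [e1, Real.exp_pos (σ ^ 2 * t), Real.exp_pos (σ ^ 2 * t₀)]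
    have h0 : Tendsto (fun t : ℝ => Real.exp (-(σ ^ 2 * t))) atTop (nhds 0) := by
      apply Real.tendsto_exp_atBot.comp
      exact tendsto_neg_atTop_atBot.comp (tendsto_id.const_mul_atTop hk)
    have hlim : Tendsto (fun t : ℝ =>
        -(c / σ ^ 2) * (1 - Real.exp (σ ^ 2 * t₀) * Real.exp (-(σ ^ 2 * t)))) atTop
        (nhds (-(c / σ ^ 2) * (1 - Real.exp (σ ^ 2 * t₀) * 0))) :=
      (tendsto_const_nhds.sub (tendsto_const_nhds.mul h0)).const_mul _
    rw [mul_zero, sub_zero, mul_one] at hlim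
    exact Tendsto.congr' (hev.mono fun t ht => ht.symm) hlim
  · -- case μ > 1
    intro hμgt
    -- lower bound on G t
    have key : ∀ t : ℝ, t₀ < t →
        ((t - t₀) / 2) ^ (μ - 1) * ((1 - Real.exp (-(σ ^ 2 * ((t - t₀) / 2)))) / σ ^ 2)
          ≤ Real.exp (-(σ ^ 2 * t)) *
            ∫ s in t₀..t, (s - t₀) ^ (μ - 1) * Real.exp (σ ^ 2 * s) := by
      intro t ht
      set m : ℝ := (t₀ + t) / 2 with hm
      set τ : ℝ := (t - t₀) / 2 with hτ
      have hτpos : 0 < τ := by simp [hτ]; linarith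
      have ht₀m : t₀ ≤ m := by simp [hm]; linarith
      have hmt : m ≤ t := by simp [hm]; linarith
      have hmτ : m - t₀ = τ := by simp [hm, hτ]; ring
      have hAnn : 0 ≤ ∫ s in t₀..m, (s - t₀) ^ (μ - 1) * Real.exp (σ ^ 2 * s) := by
        apply intervalIntegral.integral_nonneg ht₀m
        intro s hs
        exact mul_nonneg (Real.rpow_nonneg (by linarith [hs.1]) _) (Real.exp_pos _).le
      have hB : τ ^ (μ - 1) * ((Real.exp (σ ^ 2 * t) - Real.exp (σ ^ 2 * m)) / σ ^ 2)
          ≤ ∫ s in m..t, (s - t₀) ^ (μ - 1) * Real.exp (σ ^ 2 * s) := by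
        have h1 : (∫ s in m..t, τ ^ (μ - 1) * Real.exp (σ ^ 2 * s))
            ≤ ∫ s in m..t, (s - t₀) ^ (μ - 1) * Real.exp (σ ^ 2 * s) := by
          apply intervalIntegral.integral_mono_on hmt
            (IntervalIntegrable.const_mul (Continuous.intervalIntegrable (Real.continuous_exp.comp (continuous_const.mul continuous_id)) m t) _)
            (hint _ _)
          intro s hs
          apply mul_le_mul_of_nonneg_right _ (Real.exp_pos _).le
          exact Real.rpow_le_rpow hτpos.le (by linarith [hs.1, hmτ]) (by linarith)
        calc τ ^ (μ - 1) * ((Real.exp (σ ^ 2 * t) - Real.exp (σ ^ 2 * m)) / σ ^ 2)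
            = ∫ s in m..t, τ ^ (μ - 1) * Real.exp (σ ^ 2 * s) := by
              rw [intervalIntegral.integral_const_mul, hexp]
          _ ≤ _ := h1
      have hE : 0 < Real.exp (-(σ ^ 2 * t)) := Real.exp_pos _
      calc τ ^ (μ - 1) * ((1 - Real.exp (-(σ ^ 2 * τ))) / σ ^ 2)
          = Real.exp (-(σ ^ 2 * t)) *
            (τ ^ (μ - 1) * ((Real.exp (σ ^ 2 * t) - Real.exp (σ ^ 2 * m)) / σ ^ 2)) := by
            rw [show Real.exp (-(σ ^ 2 * τ))
              = Real.exp (-(σ ^ 2 * t)) * Real.exp (σ ^ 2 * m) from (he1 t).symm]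
            have e1 : Real.exp (-(σ ^ 2 * t)) * Real.exp (σ ^ 2 * t) = 1 := he2 t
            linear_combination (-(τ ^ (μ - 1)) / σ ^ 2) * e1
        _ ≤ Real.exp (-(σ ^ 2 * t)) *
            ∫ s in m..t, (s - t₀) ^ (μ - 1) * Real.exp (σ ^ 2 * s) := by gcongr
        _ ≤ Real.exp (-(σ ^ 2 * t)) *
            ∫ s in t₀..t, (s - t₀) ^ (μ - 1) * Real.exp (σ ^ 2 * s) := by
            rw [hsplit t ht]
            have : (0:ℝ) ≤ Real.exp (-(σ ^ 2 * t)) := hE.le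
            nlinarith [hAnn, hE]
    -- the lower bound tends to atTop
    have hL : Tendsto (fun t : ℝ =>
        ((t - t₀) / 2) ^ (μ - 1) * ((1 - Real.exp (-(σ ^ 2 * ((t - t₀) / 2)))) / σ ^ 2))
        atTop atTop := by
      apply Filter.Tendsto.atTop_mul_pos (C := (1 - 0) / σ ^ 2) (by positivity)
      · exact (tendsto_rpow_atTop (by linarith : (0:ℝ) < μ - 1)).comp htau
      · apply Tendsto.div_const
        apply tendsto_const_nhds.sub
        apply Real.tendsto_exp_atBot.comp
        exact tendsto_neg_atTop_atBot.comp (htau.const_mul_atTop hk)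
    have hG : Tendsto (fun t : ℝ =>
        Real.exp (-(σ ^ 2 * t)) * ∫ s in t₀..t, (s - t₀) ^ (μ - 1) * Real.exp (σ ^ 2 * s))
        atTop atTop := by
      apply tendsto_atTop_mono' _ _ hL
      filter_upwards [eventually_gt_atTop t₀] with t ht
      exact key t ht
    have hcm : Tendsto (fun t : ℝ =>
        (c * μ) * (Real.exp (-(σ ^ 2 * t)) *
          ∫ s in t₀..t, (s - t₀) ^ (μ - 1) * Real.exp (σ ^ 2 * s))) atTop atTop :=
      hG.const_mul_atTop (by positivity)
    have hneg := tendsto_neg_atTop_atBot.comp hcm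
    apply Tendsto.congr' _ hneg
    filter_upwards [hhev] with t htt
    simp only [Function.comp]
    rw [htt]; ring
end

section
/- Let d ≥ 1, β > 0, let Φ : [0,∞) × ℝ^d → ℝ satisfy condition (C), and let (Φ_γ)_{γ} be a family of functions Φ_γ : [0,∞) × ℝ^d → ℝ, indexed by γ ranging over a sequence converging to 0, such that: each Φ_γ(t,·) is β-strongly convex and lower semicontinuous; for each u ∈ ℝ^d and each T > 0, sup_{0 ≤ t ≤ T} |Φ_γ(t,u)| < ∞; and for each u ∈ ℝ^d and each T > 0, sup_{0 ≤ t ≤ T} |Φ_γ(t,u) − Φ(t,u)| → 0 as γ → 0. Let m_γ(t,v) denote the unique minimizer of w ↦ Φ_γ(t,w) − ⟨w,v⟩. Then for every C > 0 and T > 0 there is a constant C′ > 0 (depending on T, C, β) such that sup_γ sup_{0 ≤ t ≤ T} sup_{‖v‖₂ ≤ C} ‖m_γ(t,v)‖₂ ≤ C′. -/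
open RealInnerProductSpace Filter

/-
At each point the values `Φγ n t u` are bounded uniformly in `n` and `t ∈ [0,T]`:
finitely many `n` are bounded by assumption and the others are within `1` of `Φ(t,u)`, which is
bounded on `[0,T]` by continuity. A family of convex functions that is pointwise bounded above is
uniformly bounded above on a ball `B(0,ρ)`, because `B(0,ρ)` lies in the convex hull of finitely
many points. Finally, if `x` minimizes a `β`-strongly convex `g` and `g ≤ K` on `B(0,ρ)`, strong
convexity on the segment from `x` to the point of the sphere `‖y‖ = ρ` opposite to `x` gives
`β ρ ‖x‖ ≤ 2 (K - g 0)`; for `g = Φγ(t,·) - ⟪·, v⟫` both `K` and `g 0` are controlled.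
-/

open Metric Set Topology

theorem exists_forall_abs_le_of_eventually_abs_sub_le {X : Type*} {s : Set X}
    {F : ℕ → X → ℝ} {G : X → ℝ} {B : ℝ} (hF : ∀ n, ∃ A, ∀ t ∈ s, |F n t| ≤ A)
    (hG : ∀ t ∈ s, |G t| ≤ B) (hFG : ∃ N, ∀ n ≥ N, ∀ t ∈ s, |F n t - G t| ≤ 1) :
    ∃ M, ∀ n, ∀ t ∈ s, |F n t| ≤ M := by
  obtain ⟨N, hN⟩ := hFG
  choose A hA using hF
  obtain ⟨A', hA'⟩ := ((Finset.range N).image A).bddAbove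
  refine ⟨max (B + 1) A', fun n t ht => ?_⟩
  rcases le_or_gt N n with hn | hn
  · have := abs_sub_abs_le_abs_sub (F n t) (G t)
    linarith [hN n hn t ht, hG t ht, le_max_left (B + 1) A']
  · exact le_max_of_le_right <|
      (hA n t ht).trans (hA' (Finset.mem_image_of_mem A (Finset.mem_range.2 hn)))

theorem exists_forall_closedBall_le_of_convexOn {ι E : Type*} [NormedAddCommGroup E]
    [NormedSpace ℝ E] [FiniteDimensional ℝ E] {f : ι → E → ℝ}
    (hf : ∀ i, ConvexOn ℝ univ (f i)) (hbdd : ∀ x, BddAbove (range fun i => f i x)) (x₀ : E) :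
    ∃ ρ > 0, ∃ M, ∀ i, ∀ y ∈ closedBall x₀ ρ, f i y ≤ M := by
  obtain ⟨b, hx₀, -⟩ := exists_mem_interior_convexHull_affineBasis (univ_mem : univ ∈ 𝓝 x₀)
  obtain ⟨ε, hε, hball⟩ := Metric.isOpen_iff.1 isOpen_interior x₀ hx₀
  choose A hA using fun j => hbdd (b j)
  obtain ⟨M, hM⟩ := (finite_range A).bddAbove
  refine ⟨ε / 2, half_pos hε, M, fun i y hy => ?_⟩
  have hy : y ∈ convexHull ℝ (range b) :=
    interior_subset (hball (closedBall_subset_ball (half_lt_self hε) hy))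
  obtain ⟨_, ⟨j, rfl⟩, hle⟩ := (hf i).exists_ge_of_mem_convexHull (subset_univ _) hy
  exact hle.trans ((hA j ⟨i, rfl⟩).trans (hM ⟨j, rfl⟩))

namespace IsStronglyConvex

variable {d : ℕ} {β : ℝ} {f : EuclideanSpace ℝ (Fin d) → ℝ}

theorem convexOn (hβ : 0 ≤ β) (hf : IsStronglyConvex β f) : ConvexOn ℝ univ f := by
  refine ⟨convex_univ, fun x _ y _ a b ha hb hab => ?_⟩
  obtain rfl : b = 1 - a := by linarith
  have hQ : 0 ≤ β * (a * (1 - a)) / 2 * ‖x - y‖ ^ 2 := by positivity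
  simpa only [smul_eq_mul] using (hf x y a ha (by linarith)).trans (by linarith)

theorem sub_inner (hf : IsStronglyConvex β f) (v : EuclideanSpace ℝ (Fin d)) :
    IsStronglyConvex β (fun w => f w - ⟪w, v⟫) := by
  intro x y α hα₀ hα₁
  simp only [inner_add_left, real_inner_smul_left]
  linarith [hf x y α hα₀ hα₁]

theorem norm_sub_le_of_isMinOn (hf : IsStronglyConvex β f) (hβ : 0 < β)
    {x y₀ : EuclideanSpace ℝ (Fin d)} {ρ K : ℝ} (hx : IsMinOn f univ x) (hρ : 0 < ρ)
    (hK : ∀ y ∈ closedBall y₀ ρ, f y ≤ K) : ‖x - y₀‖ ≤ 2 * (K - f y₀) / (β * ρ) := by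
  have hy₀ : f y₀ ≤ K := hK y₀ (mem_closedBall_self hρ.le)
  rw [le_div_iff₀ (by positivity)]
  rcases (norm_nonneg (x - y₀)).eq_or_lt with hr0 | hr0
  · rw [← hr0]; linarith
  set r := ‖x - y₀‖ with hr
  -- `y` is the point of the sphere `‖y - y₀‖ = ρ` opposite to `x`, and `y₀ = α • x + (1 - α) • y`
  set y := y₀ - (ρ / r) • (x - y₀)
  have hyK : f y ≤ K := hK y <| by
    simpa [y, norm_smul, abs_of_pos hρ, abs_of_pos hr0] using (div_mul_cancel₀ ρ hr0.ne').le
  set α := ρ / (ρ + r)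
  have hα₁ : α ≤ 1 := div_le_one_of_le₀ (by linarith) (by positivity)
  have hα : (1 - α) * (ρ / r) = α := by simp only [α]; field_simp; ring
  have hcomb : α • x + (1 - α) • y = y₀ := by
    rw [smul_sub, smul_smul, hα]; module
  have hxy : ‖x - y‖ = r + ρ := by
    rw [show x - y = (1 + ρ / r) • (x - y₀) by module, norm_smul,
      Real.norm_of_nonneg (by positivity), ← hr]
    field_simp
  have hsc := hf x y α (by positivity) hα₁
  rw [hcomb, hxy] at hsc
  have hfx : α * f x ≤ α * f y₀ :=
    mul_le_mul_of_nonneg_left (isMinOn_univ_iff.1 hx y₀) (by positivity)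
  have hfy : (1 - α) * f y ≤ (1 - α) * K := mul_le_mul_of_nonneg_left hyK (by linarith)
  have h1 : (1 - α) * f y₀ ≤ (1 - α) * K - β * (α * (1 - α)) / 2 * (r + ρ) ^ 2 := by linarith
  have h2 : r * f y₀ ≤ r * (K - β * ρ * (ρ + r) / 2) :=
    calc r * f y₀ = (ρ + r) * ((1 - α) * f y₀) := by simp only [α]; field_simp; ring
      _ ≤ (ρ + r) * ((1 - α) * K - β * (α * (1 - α)) / 2 * (r + ρ) ^ 2) :=
        mul_le_mul_of_nonneg_left h1 (by positivity)
      _ = r * (K - β * ρ * (ρ + r) / 2) := by simp only [α]; field_simp; ring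
  have h3 := le_of_mul_le_mul_left h2 hr0
  have : 0 < β * ρ * ρ := by positivity
  linarith

end IsStronglyConvex

theorem stmt16_general {d : ℕ} {β : ℝ} (hβ : 0 < β)
    (Φ : ℝ → EuclideanSpace ℝ (Fin d) → ℝ)
    (hC2 : ∀ u : EuclideanSpace ℝ (Fin d), ContinuousOn (fun t => Φ t u) (Set.Ici 0))
    (Φγ : ℕ → ℝ → EuclideanSpace ℝ (Fin d) → ℝ)
    (hsc : ∀ n, ∀ t : ℝ, 0 ≤ t → IsStronglyConvex β (Φγ n t) ∧ LowerSemicontinuous (Φγ n t))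
    (hbdd : ∀ n, ∀ u : EuclideanSpace ℝ (Fin d), ∀ T : ℝ, 0 < T →
      ∃ B : ℝ, ∀ t ∈ Set.Icc (0 : ℝ) T, |Φγ n t u| ≤ B)
    (hconv : ∀ u : EuclideanSpace ℝ (Fin d), ∀ T : ℝ, 0 < T → ∀ ε : ℝ, 0 < ε →
      ∃ N : ℕ, ∀ n ≥ N, ∀ t ∈ Set.Icc (0 : ℝ) T, |Φγ n t u - Φ t u| ≤ ε)
    (m : ℕ → ℝ → EuclideanSpace ℝ (Fin d) → EuclideanSpace ℝ (Fin d))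
    (hm : ∀ n, ∀ t : ℝ, 0 ≤ t → ∀ v u : EuclideanSpace ℝ (Fin d),
      Φγ n t (m n t v) - ⟪m n t v, v⟫ ≤ Φγ n t u - ⟪u, v⟫) :
    ∀ C : ℝ, 0 < C → ∀ T : ℝ, 0 < T → ∃ C' : ℝ, 0 < C' ∧
      ∀ n, ∀ t ∈ Set.Icc (0 : ℝ) T, ∀ v : EuclideanSpace ℝ (Fin d),
        ‖v‖ ≤ C → ‖m n t v‖ ≤ C' := by
  intro C hC T hT
  have hunif : ∀ u, ∃ M, ∀ n, ∀ t ∈ Icc (0 : ℝ) T, |Φγ n t u| ≤ M := fun u => by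
    obtain ⟨B, hB⟩ :=
      isCompact_Icc.exists_bound_of_continuousOn ((hC2 u).mono Icc_subset_Ici_self)
    exact exists_forall_abs_le_of_eventually_abs_sub_le (fun n => hbdd n u T hT) hB
      (hconv u T hT 1 one_pos)
  obtain ⟨ρ, hρ, M, hM⟩ := exists_forall_closedBall_le_of_convexOn
    (f := fun p : ℕ × Icc (0 : ℝ) T => Φγ p.1 p.2)
    (fun p => (hsc p.1 p.2 p.2.2.1).1.convexOn hβ.le)
    (fun u => (hunif u).imp fun M hM => by
      rintro _ ⟨p, rfl⟩; exact (le_abs_self _).trans (hM p.1 p.2 p.2.2)) 0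
  obtain ⟨M₀, hM₀⟩ := hunif 0
  refine ⟨max 1 (2 * (M + ρ * C + M₀) / (β * ρ)), by positivity, fun n t ht v hv => ?_⟩
  have hK : ∀ y ∈ closedBall 0 ρ, Φγ n t y - ⟪y, v⟫ ≤ M + ρ * C := fun y hy => by
    have hyv : -⟪y, v⟫ ≤ ρ * C := (neg_le_abs _).trans <| (abs_real_inner_le_norm y v).trans <|
      mul_le_mul (mem_closedBall_zero_iff.1 hy) hv (norm_nonneg v) hρ.le
    linarith [hM (n, ⟨t, ht⟩) y hy]
  have h0 : -M₀ ≤ Φγ n t 0 - ⟪0, v⟫ := by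
    rw [inner_zero_left, sub_zero]; exact neg_le_of_abs_le (hM₀ n t ht)
  calc ‖m n t v‖ = ‖m n t v - 0‖ := by rw [sub_zero]
    _ ≤ 2 * (M + ρ * C - (Φγ n t 0 - ⟪0, v⟫)) / (β * ρ) :=
      ((hsc n t ht.1).1.sub_inner v).norm_sub_le_of_isMinOn hβ
        (isMinOn_univ_iff.2 (hm n t ht.1 v)) hρ hK
    _ ≤ 2 * (M + ρ * C + M₀) / (β * ρ) := by gcongr; linarith
    _ ≤ _ := le_max_right _ _

/-- uniform boundedness of minimizers: if `Φ` satisfies condition (C)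
and `(Φ_γ)` is a family (indexed along a sequence `γ → 0`) of `β`-strongly convex,
l.s.c. functions, locally bounded in `t` for each `u`, converging to `Φ` uniformly
on compact time intervals pointwise in `u`, then the minimizers `m_γ(t,v)` of
`w ↦ Φ_γ(t,w) − ⟨w,v⟩` are bounded uniformly over `γ`, `t ∈ [0,T]` and `‖v‖₂ ≤ C`. -/
theorem stmt16 {d : ℕ} (hd : 1 ≤ d) {β : ℝ} (hβ : 0 < β)
    (Φ : ℝ → EuclideanSpace ℝ (Fin d) → ℝ)
    (hC1 : ∀ t : ℝ, 0 ≤ t → IsStronglyConvex β (Φ t) ∧ LowerSemicontinuous (Φ t))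
    (hC2 : ∀ u : EuclideanSpace ℝ (Fin d), ContinuousOn (fun t => Φ t u) (Set.Ici 0))
    (hC3 : ∃ u₀ : EuclideanSpace ℝ (Fin d), ∀ T : ℝ, 0 < T → ∃ cT : ℝ, 0 < cT ∧
      ∀ t ∈ Set.Icc (0 : ℝ) T, ∀ g : EuclideanSpace ℝ (Fin d),
        IsSubgradientAt (Φ t) u₀ g → ‖g‖ ≤ cT)
    (γseq : ℕ → ℝ) (hγpos : ∀ n, 0 < γseq n) (hγ0 : Tendsto γseq atTop (nhds 0))
    (Φγ : ℕ → ℝ → EuclideanSpace ℝ (Fin d) → ℝ)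
    (hsc : ∀ n, ∀ t : ℝ, 0 ≤ t → IsStronglyConvex β (Φγ n t) ∧ LowerSemicontinuous (Φγ n t))
    (hbdd : ∀ n, ∀ u : EuclideanSpace ℝ (Fin d), ∀ T : ℝ, 0 < T →
      ∃ B : ℝ, ∀ t ∈ Set.Icc (0 : ℝ) T, |Φγ n t u| ≤ B)
    (hconv : ∀ u : EuclideanSpace ℝ (Fin d), ∀ T : ℝ, 0 < T → ∀ ε : ℝ, 0 < ε →
      ∃ N : ℕ, ∀ n ≥ N, ∀ t ∈ Set.Icc (0 : ℝ) T, |Φγ n t u - Φ t u| ≤ ε)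
    (m : ℕ → ℝ → EuclideanSpace ℝ (Fin d) → EuclideanSpace ℝ (Fin d))
    (hm : ∀ n, ∀ t : ℝ, 0 ≤ t → ∀ v u : EuclideanSpace ℝ (Fin d),
      Φγ n t (m n t v) - ⟪m n t v, v⟫ ≤ Φγ n t u - ⟪u, v⟫) :
    ∀ C : ℝ, 0 < C → ∀ T : ℝ, 0 < T → ∃ C' : ℝ, 0 < C' ∧
      ∀ n, ∀ t ∈ Set.Icc (0 : ℝ) T, ∀ v : EuclideanSpace ℝ (Fin d),
        ‖v‖ ≤ C → ‖m n t v‖ ≤ C' :=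
  stmt16_general hβ Φ hC2 Φγ hsc hbdd hconv m hm
end
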